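/- arXiv:1210.0779 — 11 statements merged into one kernel-verified Lean document; each statement's English description precedes it below -/
import Mathlib

section
/- Let ν ≠ 0, θ ∈ ℝ, G ∈ [-L, ∞), and let (U, V, W) be a solution of the regularized Fourier X-mode system. Let (a_G, b_G) ∈ ℂ² be the unique solution of a_G A_ν(G) + b_G B_ν(G) = V(G), a_G A_ν'(G) + b_G B_ν'(G) = W(G). Then for all x ∈ [-L, ∞): (i) U(x) − ∫_G^x [(D_x^θ D_z^θ k^ν)(x,z)/(α(x)+iν)] U(z) dz = (a_G (D_x^θ A_ν)(x) + b_G (D_x^θ B_ν)(x))/(α(x)+iν); (ii) V(x) = a_G A_ν(x) + b_G B_ν(x) + ∫_G^x (D_z^θ k^ν)(x,z) U(z) dz; (iii) W(x) = a_G A_ν'(x) + b_G B_ν'(x) + ∫_G^x ∂_x (D_z^θ k^ν)(x,z) U(z) dz. -/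
/-!
Variation of constants. Since `A B' - A' B ≡ 1`, the coordinates of `V` in the fundamental
system `A, B` are the Wronskians `V B' - W B` and `-(V A' - W A)` of `(V, W)` against `B` and `A`.
Along the system these Wronskians have derivatives `(D^θ B) U` and `(D^θ A) U`, so integrating
them from `G` gives (ii) and (iii); (i) then follows from `(α + iν) U = iθ W - iδ V`.
-/

open Complex

/-- the kernel `k^ν(x,z) = B_ν(z)A_ν(x) − B_ν(x)A_ν(z)` -/
noncomputable def kker (A B : ℝ → ℂ) (x z : ℝ) : ℂ := B z * A x - B x * A z

/-- `(D_z^θ k^ν)(x,z) = iθ ∂_z k^ν(x,z) − iδ(z) k^ν(x,z)` -/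
noncomputable def Dzk (δ : ℝ → ℝ) (θ : ℝ) (A A' B B' : ℝ → ℂ) (x z : ℝ) : ℂ :=
  Complex.I * (θ : ℂ) * (B' z * A x - B x * A' z)
    - Complex.I * (δ z : ℂ) * kker A B x z

/-- `∂_x (D_z^θ k^ν)(x,z)` -/
noncomputable def pxDzk (δ : ℝ → ℝ) (θ : ℝ) (A A' B B' : ℝ → ℂ) (x z : ℝ) : ℂ :=
  Complex.I * (θ : ℂ) * (B' z * A' x - B' x * A' z)
    - Complex.I * (δ z : ℂ) * (B z * A' x - B' x * A z)

/-- `(D_x^θ D_z^θ k^ν)(x,z) = iθ ∂_x (D_z^θ k^ν)(x,z) − iδ(x) (D_z^θ k^ν)(x,z)` -/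
noncomputable def DxDzk (δ : ℝ → ℝ) (θ : ℝ) (A A' B B' : ℝ → ℂ) (x z : ℝ) : ℂ :=
  Complex.I * (θ : ℂ) * pxDzk δ θ A A' B B' x z
    - Complex.I * (δ x : ℂ) * Dzk δ θ A A' B B' x z

open intervalIntegral

def wronskian (f f' g g' : ℝ → ℂ) (t : ℝ) : ℂ := f t * g' t - f' t * g t

section VariationOfConstants

variable {a G x : ℝ} {c r s V W A A' B B' : ℝ → ℂ}

theorem hasDerivAt_wronskian {t : ℝ} (hV : HasDerivAt V (W t + r t) t)
    (hW : HasDerivAt W (s t - c t * V t) t) (hB : HasDerivAt B (B' t) t)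
    (hB' : HasDerivAt B' (-c t * B t) t) :
    HasDerivAt (wronskian V W B B') (r t * B' t - s t * B t) t :=
  ((hV.mul hB').sub (hW.mul hB)).congr_deriv (by ring)

theorem wronskian_sub_eq_integral
    (hV : ∀ t, a ≤ t → HasDerivAt V (W t + r t) t)
    (hW : ∀ t, a ≤ t → HasDerivAt W (s t - c t * V t) t)
    (hB : ∀ t, a ≤ t → HasDerivAt B (B' t) t)
    (hB' : ∀ t, a ≤ t → HasDerivAt B' (-c t * B t) t) (hG : a ≤ G) (hx : a ≤ x)
    (hf : IntervalIntegrable (fun z => r z * B' z - s z * B z) MeasureTheory.volume G x) :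
    wronskian V W B B' x - wronskian V W B B' G = ∫ z in G..x, (r z * B' z - s z * B z) := by
  refine (integral_eq_sub_of_hasDerivAt (fun t ht => ?_) hf).symm
  have hat : a ≤ t := Set.ordConnected_Ici.uIcc_subset hG hx ht
  exact hasDerivAt_wronskian (hV t hat) (hW t hat) (hB t hat) (hB' t hat)

theorem wronskian_eq_of_le {t₀ t : ℝ}
    (hA : ∀ t, a ≤ t → HasDerivAt A (A' t) t)
    (hA' : ∀ t, a ≤ t → HasDerivAt A' (-c t * A t) t)
    (hB : ∀ t, a ≤ t → HasDerivAt B (B' t) t)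
    (hB' : ∀ t, a ≤ t → HasDerivAt B' (-c t * B t) t) (ht₀ : a ≤ t₀) (ht : a ≤ t) :
    wronskian A A' B B' t = wronskian A A' B B' t₀ := by
  have h := wronskian_sub_eq_integral (r := 0) (s := 0) (fun t ht => by simpa using hA t ht)
    (fun t ht => by simpa using hA' t ht) hB hB' ht₀ ht (by simp)
  simpa [sub_eq_zero] using h

theorem variation_of_constants {a₀ b₀ : ℂ}
    (hV : ∀ t, a ≤ t → HasDerivAt V (W t + r t) t)
    (hW : ∀ t, a ≤ t → HasDerivAt W (s t - c t * V t) t)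
    (hA : ∀ t, a ≤ t → HasDerivAt A (A' t) t)
    (hA' : ∀ t, a ≤ t → HasDerivAt A' (-c t * A t) t)
    (hB : ∀ t, a ≤ t → HasDerivAt B (B' t) t)
    (hB' : ∀ t, a ≤ t → HasDerivAt B' (-c t * B t) t)
    (hwr : ∀ t, a ≤ t → wronskian A A' B B' t = 1) (hG : a ≤ G) (hx : a ≤ x)
    (hf : IntervalIntegrable (fun z => r z * B' z - s z * B z) MeasureTheory.volume G x)
    (hg : IntervalIntegrable (fun z => r z * A' z - s z * A z) MeasureTheory.volume G x)
    (hV₀ : a₀ * A G + b₀ * B G = V G) (hW₀ : a₀ * A' G + b₀ * B' G = W G) :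
    V x = a₀ * A x + b₀ * B x + (A x * (∫ z in G..x, r z * B' z - s z * B z)
        - B x * ∫ z in G..x, r z * A' z - s z * A z) ∧
      W x = a₀ * A' x + b₀ * B' x + (A' x * (∫ z in G..x, r z * B' z - s z * B z)
        - B' x * ∫ z in G..x, r z * A' z - s z * A z) := by
  have hP := wronskian_sub_eq_integral hV hW hB hB' hG hx hf
  have hQ := wronskian_sub_eq_integral hV hW hA hA' hG hx hg
  have hwG := hwr G hG
  have hwx := hwr x hx
  simp only [wronskian] at hP hQ hwG hwx
  constructor
  · linear_combination A x * hP - B x * hQ - V x * hwx - (A x * B' G - B x * A' G) * hV₀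
      - (B x * A G - A x * B G) * hW₀ + (a₀ * A x + b₀ * B x) * hwG
  · linear_combination A' x * hP - B' x * hQ - W x * hwx - (A' x * B' G - B' x * A' G) * hV₀
      - (B' x * A G - A' x * B G) * hW₀ + (a₀ * A' x + b₀ * B' x) * hwG

end VariationOfConstants

theorem integral_const_mul_sub_const_mul {a b : ℝ} {f g : ℝ → ℂ}
    (hf : IntervalIntegrable f MeasureTheory.volume a b)
    (hg : IntervalIntegrable g MeasureTheory.volume a b) (u v : ℂ) :
    ∫ z in a..b, (u * f z - v * g z) = u * (∫ z in a..b, f z) - v * ∫ z in a..b, g z := by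
  rw [integral_sub (hf.const_mul u) (hg.const_mul v), integral_const_mul, integral_const_mul]

theorem kernel_form_of_variation_of_constants {δ : ℝ → ℝ} {θ G x : ℝ} {c aG bG : ℂ}
    {p q U V W A A' B B' : ℝ → ℂ}
    (hp : IntervalIntegrable p MeasureTheory.volume G x)
    (hq : IntervalIntegrable q MeasureTheory.volume G x)
    (hp_eq : ∀ z, p z = (Complex.I * θ * B' z - Complex.I * δ z * B z) * U z)
    (hq_eq : ∀ z, q z = (Complex.I * θ * A' z - Complex.I * δ z * A z) * U z)
    (hc : c ≠ 0) (halg : Complex.I * θ * W x - c * U x - Complex.I * δ x * V x = 0)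
    (hV : V x = aG * A x + bG * B x
      + (A x * (∫ z in G..x, p z) - B x * ∫ z in G..x, q z))
    (hW : W x = aG * A' x + bG * B' x
      + (A' x * (∫ z in G..x, p z) - B' x * ∫ z in G..x, q z)) :
    (U x - (∫ z in G..x, DxDzk δ θ A A' B B' x z / c * U z)
        = (aG * (Complex.I * θ * A' x - Complex.I * δ x * A x)
            + bG * (Complex.I * θ * B' x - Complex.I * δ x * B x)) / c)
      ∧ (V x = aG * A x + bG * B x + ∫ z in G..x, Dzk δ θ A A' B B' x z * U z)
      ∧ (W x = aG * A' x + bG * B' x + ∫ z in G..x, pxDzk δ θ A A' B B' x z * U z) := by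
  refine ⟨?_, hV.trans ?_, hW.trans ?_⟩
  · have hX : ∫ z in G..x, DxDzk δ θ A A' B B' x z / c * U z
        = ((Complex.I * θ * A' x - Complex.I * δ x * A x) * (∫ z in G..x, p z)
          - (Complex.I * θ * B' x - Complex.I * δ x * B x) * ∫ z in G..x, q z) / c := by
      rw [← integral_const_mul_sub_const_mul hp hq, ← integral_div]
      exact integral_congr fun z _ => by simp only [DxDzk, pxDzk, Dzk, kker, hp_eq, hq_eq]; ring
    rw [hX, eq_div_iff hc, sub_mul, div_mul_cancel₀ _ hc]
    linear_combination -halg + Complex.I * θ * hW - Complex.I * δ x * hV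
  · rw [← integral_const_mul_sub_const_mul hp hq]
    exact congrArg _ (integral_congr fun z _ => by simp only [Dzk, kker, hp_eq, hq_eq]; ring)
  · rw [← integral_const_mul_sub_const_mul hp hq]
    exact congrArg _ (integral_congr fun z _ => by simp only [pxDzk, hp_eq, hq_eq]; ring)

theorem integral_representation_of_solution_general
    (L : ℝ) (hL : 0 < L)
    (α δ : ℝ → ℝ)
    (hα : ContDiffOn ℝ 2 α (Set.Ici (-L)))
    (hδ : ContDiffOn ℝ 1 δ (Set.Ici (-L)))
    (θ ν : ℝ) (hν : ν ≠ 0)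
    -- the solution (U, V, W) of the regularized Fourier X-mode system
    (U V W : ℝ → ℂ)
    (hVd : ∀ x, -L ≤ x → HasDerivAt V (W x + Complex.I * (θ : ℂ) * U x) x)
    (halg : ∀ x, -L ≤ x →
      Complex.I * (θ : ℂ) * W x - ((α x : ℂ) + Complex.I * (ν : ℂ)) * U x
        - Complex.I * (δ x : ℂ) * V x = 0)
    (hWd : ∀ x, -L ≤ x → HasDerivAt W
      (Complex.I * (δ x : ℂ) * U x - ((α x : ℂ) + Complex.I * (ν : ℂ)) * V x) x)
    -- the fundamental solutions A_ν, B_ν of −u'' − (α+iν)u = 0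
    (A A' B B' : ℝ → ℂ)
    (hA : ∀ x, -L ≤ x → HasDerivAt A (A' x) x)
    (hA' : ∀ x, -L ≤ x → HasDerivAt A' (-((α x : ℂ) + Complex.I * (ν : ℂ)) * A x) x)
    (hB : ∀ x, -L ≤ x → HasDerivAt B (B' x) x)
    (hB' : ∀ x, -L ≤ x → HasDerivAt B' (-((α x : ℂ) + Complex.I * (ν : ℂ)) * B x) x)
    (hA0 : A 0 = 1) (hA'0 : A' 0 = 0) (hB0 : B 0 = 0) (hB'0 : B' 0 = 1)
    -- the reference point G and the integration constants
    (G : ℝ) (hG : -L ≤ G)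
    (aG bG : ℂ)
    (hab1 : aG * A G + bG * B G = V G)
    (hab2 : aG * A' G + bG * B' G = W G) :
    ∀ x, -L ≤ x →
      (U x - (∫ z in G..x, DxDzk δ θ A A' B B' x z / ((α x : ℂ) + Complex.I * (ν : ℂ)) * U z)
        = (aG * (Complex.I * (θ : ℂ) * A' x - Complex.I * (δ x : ℂ) * A x)
            + bG * (Complex.I * (θ : ℂ) * B' x - Complex.I * (δ x : ℂ) * B x))
          / ((α x : ℂ) + Complex.I * (ν : ℂ)))
      ∧ (V x = aG * A x + bG * B x + ∫ z in G..x, Dzk δ θ A A' B B' x z * U z)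
      ∧ (W x = aG * A' x + bG * B' x + ∫ z in G..x, pxDzk δ θ A A' B B' x z * U z) := by
  have hc : ∀ t : ℝ, (α t : ℂ) + Complex.I * ν ≠ 0 := fun t h => hν (by simpa using congrArg im h)
  have hU : ∀ t, -L ≤ t →
      U t = (Complex.I * θ * W t - Complex.I * δ t * V t) / ((α t : ℂ) + Complex.I * ν) :=
    fun t ht => by rw [eq_div_iff (hc t)]; linear_combination -halg t ht
  have hwr : ∀ t, -L ≤ t → wronskian A A' B B' t = 1 := fun t ht =>
    (wronskian_eq_of_le hA hA' hB hB' (neg_nonpos.2 hL.le) ht).trans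
      (by simp [wronskian, hA0, hA'0, hB0, hB'0])
  have hαc := hα.continuousOn
  have hδc := hδ.continuousOn
  have hVc := HasDerivAt.continuousOn (s := Set.Ici (-L)) hVd
  have hWc := HasDerivAt.continuousOn (s := Set.Ici (-L)) hWd
  have hAc := HasDerivAt.continuousOn (s := Set.Ici (-L)) hA
  have hA'c := HasDerivAt.continuousOn (s := Set.Ici (-L)) hA'
  have hBc := HasDerivAt.continuousOn (s := Set.Ici (-L)) hB
  have hB'c := HasDerivAt.continuousOn (s := Set.Ici (-L)) hB'
  have hUc : ContinuousOn U (Set.Ici (-L)) :=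
    (ContinuousOn.div (by fun_prop) (by fun_prop) fun t _ => hc t).congr hU
  intro x hx
  have hGx : Set.uIcc G x ⊆ Set.Ici (-L) := Set.ordConnected_Ici.uIcc_subset hG hx
  have hp : ContinuousOn (fun z => Complex.I * θ * U z * B' z - Complex.I * δ z * U z * B z)
      (Set.Ici (-L)) := by fun_prop
  have hq : ContinuousOn (fun z => Complex.I * θ * U z * A' z - Complex.I * δ z * U z * A z)
      (Set.Ici (-L)) := by fun_prop
  have hpi := (hp.mono hGx).intervalIntegrable (μ := MeasureTheory.volume)
  have hqi := (hq.mono hGx).intervalIntegrable (μ := MeasureTheory.volume)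
  obtain ⟨hVx, hWx⟩ := variation_of_constants (c := fun t => (α t : ℂ) + Complex.I * ν)
    (r := fun t => Complex.I * θ * U t) (s := fun t => Complex.I * δ t * U t)
    hVd hWd hA hA' hB hB' hwr hG hx hpi hqi hab1 hab2
  exact kernel_form_of_variation_of_constants hpi hqi (fun z => by ring) (fun z => by ring)
    (hc x) (halg x hx) hVx hWx

/-- Integral representation of any solution of the regularized Fourier X-mode
system (Proposition 3.1 of the paper). -/
theorem integral_representation_of_solution
    (L : ℝ) (hL : 0 < L)
    (α δ : ℝ → ℝ)
    (hα : ContDiffOn ℝ 2 α (Set.Ici (-L)))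
    (hαbd : ∃ C, ∀ x, -L ≤ x → |α x| ≤ C)
    (hα0 : α 0 = 0) (hα'0 : deriv α 0 < 0)
    (hδ : ContDiffOn ℝ 1 δ (Set.Ici (-L)))
    (hδbd : ∃ C, ∀ x, -L ≤ x → |δ x| ≤ C)
    (θ ν : ℝ) (hν : ν ≠ 0)
    -- the solution (U, V, W) of the regularized Fourier X-mode system
    (U V W : ℝ → ℂ)
    (hVd : ∀ x, -L ≤ x → HasDerivAt V (W x + Complex.I * (θ : ℂ) * U x) x)
    (halg : ∀ x, -L ≤ x →
      Complex.I * (θ : ℂ) * W x - ((α x : ℂ) + Complex.I * (ν : ℂ)) * U x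
        - Complex.I * (δ x : ℂ) * V x = 0)
    (hWd : ∀ x, -L ≤ x → HasDerivAt W
      (Complex.I * (δ x : ℂ) * U x - ((α x : ℂ) + Complex.I * (ν : ℂ)) * V x) x)
    -- the fundamental solutions A_ν, B_ν of −u'' − (α+iν)u = 0
    (A A' B B' : ℝ → ℂ)
    (hA : ∀ x, -L ≤ x → HasDerivAt A (A' x) x)
    (hA' : ∀ x, -L ≤ x → HasDerivAt A' (-((α x : ℂ) + Complex.I * (ν : ℂ)) * A x) x)
    (hB : ∀ x, -L ≤ x → HasDerivAt B (B' x) x)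
    (hB' : ∀ x, -L ≤ x → HasDerivAt B' (-((α x : ℂ) + Complex.I * (ν : ℂ)) * B x) x)
    (hA0 : A 0 = 1) (hA'0 : A' 0 = 0) (hB0 : B 0 = 0) (hB'0 : B' 0 = 1)
    -- the reference point G and the integration constants
    (G : ℝ) (hG : -L ≤ G)
    (aG bG : ℂ)
    (hab1 : aG * A G + bG * B G = V G)
    (hab2 : aG * A' G + bG * B' G = W G) :
    ∀ x, -L ≤ x →
      (U x - (∫ z in G..x, DxDzk δ θ A A' B B' x z / ((α x : ℂ) + Complex.I * (ν : ℂ)) * U z)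
        = (aG * (Complex.I * (θ : ℂ) * A' x - Complex.I * (δ x : ℂ) * A x)
            + bG * (Complex.I * (θ : ℂ) * B' x - Complex.I * (δ x : ℂ) * B x))
          / ((α x : ℂ) + Complex.I * (ν : ℂ)))
      ∧ (V x = aG * A x + bG * B x + ∫ z in G..x, Dzk δ θ A A' B B' x z * U z)
      ∧ (W x = aG * A' x + bG * B' x + ∫ z in G..x, pxDzk δ θ A A' B B' x z * U z) :=
  integral_representation_of_solution_general L hL α δ hα hδ θ ν hν U V W hVd halg hWd A A' B B' hA
    hA' hB hB' hA0 hA'0 hB0 hB'0 G hG aG bG hab1 hab2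
end

section
/- For every θ ∈ ℝ there exists a constant M > 0 such that |(D_x^θ D_z^θ k^0)(x,z)| ≤ M |α(x)| for all (x,z) ∈ D₀; consequently the limit kernel (x,z) ↦ (D_x^θ D_z^θ k^0)(x,z)/α(x) (defined for x ≠ 0) is essentially bounded on D₀. -/
open Complex

/-!
The kernel `(D_x^θ D_z^θ k⁰)(x, z)` is a polynomial in `A, A', B, B', δ` evaluated at `x` and at
`z`, and it vanishes on the diagonal `z = x`. Since `A, B` solve the ODE, all these functions are
`C¹`, so the kernel is `C¹`, hence Lipschitz, on the compact convex square `[-L, H]²`. On `D₀` the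
point `z` lies between `0` and `x`, so `‖(D_x^θ D_z^θ k⁰)(x, z)‖ ≤ K |z - x| ≤ K |x| ≤ (K / r) |α x|`.
-/

open Set

theorem contDiffOn_one_of_hasDerivWithinAt {𝕜 F : Type*} [NontriviallyNormedField 𝕜]
    [NormedAddCommGroup F] [NormedSpace 𝕜 F] {f f' : 𝕜 → F} {s : Set 𝕜}
    (hs : UniqueDiffOn 𝕜 s) (hf : ∀ x ∈ s, HasDerivWithinAt f (f' x) s x)
    (hf' : ContinuousOn f' s) : ContDiffOn 𝕜 1 f s :=
  (contDiffOn_one_iff_derivWithin hs).2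
    ⟨fun x hx => (hf x hx).differentiableWithinAt,
      hf'.congr fun x hx => (hf x hx).derivWithin (hs x hx)⟩

theorem contDiffOn_one_of_hasDerivWithinAt_of_ode {α : ℝ → ℝ} {u u' : ℝ → ℂ} {s : Set ℝ}
    (hs : UniqueDiffOn ℝ s) (hα : ContinuousOn α s) (hu : ∀ x ∈ s, HasDerivWithinAt u (u' x) s x)
    (hu' : ∀ x ∈ s, HasDerivWithinAt u' (-(α x : ℂ) * u x) s x) :
    ContDiffOn ℝ 1 u s ∧ ContDiffOn ℝ 1 u' s := by
  have hu'c : ContinuousOn u' s := fun x hx => (hu' x hx).continuousWithinAt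
  have huc : ContinuousOn u s := fun x hx => (hu x hx).continuousWithinAt
  exact ⟨contDiffOn_one_of_hasDerivWithinAt hs hu hu'c,
    contDiffOn_one_of_hasDerivWithinAt hs hu'
      ((continuous_ofReal.comp_continuousOn hα).neg.mul huc)⟩

theorem DxDzk_self (δ : ℝ → ℝ) (θ : ℝ) (A A' B B' : ℝ → ℂ) (x : ℝ) :
    DxDzk δ θ A A' B B' x x = 0 := by
  simp only [DxDzk, pxDzk, Dzk, kker]
  ring

theorem contDiffOn_DxDzk {δ : ℝ → ℝ} {θ : ℝ} {A A' B B' : ℝ → ℂ} {s : Set ℝ} {n : WithTop ℕ∞}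
    (hA : ContDiffOn ℝ n A s) (hA' : ContDiffOn ℝ n A' s) (hB : ContDiffOn ℝ n B s)
    (hB' : ContDiffOn ℝ n B' s) (hδ : ContDiffOn ℝ n δ s) :
    ContDiffOn ℝ n (fun p : ℝ × ℝ => DxDzk δ θ A A' B B' p.1 p.2) (s ×ˢ s) := by
  have hδ : ContDiffOn ℝ n (fun t => (δ t : ℂ)) s := ofRealCLM.contDiff.comp_contDiffOn hδ
  have fst {f : ℝ → ℂ} (hf : ContDiffOn ℝ n f s) :
      ContDiffOn ℝ n (fun p : ℝ × ℝ => f p.1) (s ×ˢ s) :=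
    hf.comp contDiffOn_fst fun _ hp => hp.1
  have snd {f : ℝ → ℂ} (hf : ContDiffOn ℝ n f s) :
      ContDiffOn ℝ n (fun p : ℝ × ℝ => f p.2) (s ×ˢ s) :=
    hf.comp contDiffOn_snd fun _ hp => hp.2
  have hkker {f g : ℝ → ℂ} (hf : ContDiffOn ℝ n f s) (hg : ContDiffOn ℝ n g s) :
      ContDiffOn ℝ n (fun p : ℝ × ℝ => kker f g p.1 p.2) (s ×ˢ s) :=
    ((snd hg).mul (fst hf)).sub ((fst hg).mul (snd hf))
  simp only [DxDzk, pxDzk, Dzk]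
  exact (contDiffOn_const.mul ((contDiffOn_const.mul (hkker hA' hB')).sub
      ((contDiffOn_const.mul (snd hδ)).mul (((snd hB).mul (fst hA')).sub
        ((fst hB').mul (snd hA)))))).sub
    ((contDiffOn_const.mul (fst hδ)).mul ((contDiffOn_const.mul (((snd hB').mul (fst hA)).sub
        ((fst hB).mul (snd hA')))).sub
      ((contDiffOn_const.mul (snd hδ)).mul (hkker hA hB))))

theorem LipschitzOnWith.norm_le_mul_dist_of_apply_diag_eq_zero {α E : Type*}
    [PseudoMetricSpace α] [SeminormedAddCommGroup E] {f : α × α → E} {s : Set α} {K : NNReal}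
    (hf : LipschitzOnWith K f (s ×ˢ s)) {x z : α} (hx : x ∈ s) (hz : z ∈ s) (hdiag : f (x, x) = 0) :
    ‖f (x, z)‖ ≤ K * dist z x := by
  simpa [hdiag, dist_prod_same_left] using hf.dist_le_mul (x, z) ⟨hx, hz⟩ (x, x) ⟨hx, hx⟩

theorem limit_kernel_bounded_general
    (L H r : ℝ) (hL : 0 < L) (hH : 0 < H) (hr : 0 < r)
    (α δ : ℝ → ℝ)
    (hα : ContDiffOn ℝ 2 α (Set.Ici (-L)))
    (hαr : ∀ x ∈ Set.Icc (-L) H, r * |x| ≤ |α x|)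
    (hδ : ContDiffOn ℝ 1 δ (Set.Ici (-L)))
    (θ : ℝ)
    (A A' B B' : ℝ → ℂ)
    (hA : ∀ x, -L ≤ x → HasDerivAt A (A' x) x)
    (hA' : ∀ x, -L ≤ x → HasDerivAt A' (-(α x : ℂ) * A x) x)
    (hB : ∀ x, -L ≤ x → HasDerivAt B (B' x) x)
    (hB' : ∀ x, -L ≤ x → HasDerivAt B' (-(α x : ℂ) * B x) x) :
    ∃ M > 0, ∀ x z : ℝ, x ∈ Set.Icc (-L) H →
      ((0 ≤ z ∧ z ≤ x) ∨ (x ≤ z ∧ z ≤ 0)) →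
      ‖DxDzk δ θ A A' B B' x z‖ ≤ M * |α x|
      ∧ (x ≠ 0 → ‖DxDzk δ θ A A' B B' x z / (α x : ℂ)‖ ≤ M) := by
  obtain ⟨hAc, hA'c⟩ := contDiffOn_one_of_hasDerivWithinAt_of_ode (uniqueDiffOn_Ici (-L))
    hα.continuousOn (fun x hx => (hA x hx).hasDerivWithinAt)
    (fun x hx => (hA' x hx).hasDerivWithinAt)
  obtain ⟨hBc, hB'c⟩ := contDiffOn_one_of_hasDerivWithinAt_of_ode (uniqueDiffOn_Ici (-L))
    hα.continuousOn (fun x hx => (hB x hx).hasDerivWithinAt)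
    (fun x hx => (hB' x hx).hasDerivWithinAt)
  have hS : Icc (-L) H ⊆ Ici (-L) := Icc_subset_Ici_self
  obtain ⟨K, hK⟩ := ((contDiffOn_DxDzk (θ := θ) hAc hA'c hBc hB'c hδ).mono
    (prod_mono hS hS)).exists_lipschitzOnWith one_ne_zero
      ((convex_Icc _ _).prod (convex_Icc _ _)) (isCompact_Icc.prod isCompact_Icc)
  refine ⟨(K + 1) / r, by positivity, fun x z hx hz => ?_⟩
  replace hz : z ∈ uIcc 0 x := mem_uIcc.2 hz
  have h0 : (0 : ℝ) ∈ Icc (-L) H := ⟨by linarith, hH.le⟩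
  have hαx : r * |x| ≤ |α x| := hαr x hx
  have hzx : |x - z| ≤ |x| := by simpa using abs_sub_right_of_mem_uIcc hz
  have hbound : ‖DxDzk δ θ A A' B B' x z‖ ≤ (K + 1) / r * |α x| :=
    calc ‖DxDzk δ θ A A' B B' x z‖
        ≤ K * dist z x := hK.norm_le_mul_dist_of_apply_diag_eq_zero hx
          (uIcc_subset_Icc h0 hx hz) (DxDzk_self δ θ A A' B B' x)
      _ ≤ (K + 1) * |x| := by
          rw [Real.dist_eq, abs_sub_comm]
          exact mul_le_mul (by linarith) hzx (abs_nonneg _) (by positivity)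
      _ = (K + 1) / r * (r * |x|) := by field_simp
      _ ≤ (K + 1) / r * |α x| := by gcongr
  refine ⟨hbound, fun hx0 => ?_⟩
  have hαpos : 0 < |α x| := (mul_pos hr (abs_pos.2 hx0)).trans_le hαx
  rwa [norm_div, norm_real, Real.norm_eq_abs, div_le_iff₀ hαpos]

/-- Boundedness of the limit kernel on the domain
`D₀ = {(x,z) ∈ [-L,H]² : 0 ≤ z ≤ x or x ≤ z ≤ 0}` (Proposition 4.2 of the
paper): `|(D_x^θ D_z^θ k⁰)(x,z)| ≤ M |α(x)|` on `D₀`, hence the limit kernel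
`(D_x^θ D_z^θ k⁰)(x,z)/α(x)` is (essentially) bounded on `D₀`. -/
theorem limit_kernel_bounded
    (L H r : ℝ) (hL : 0 < L) (hH : 0 < H) (hr : 0 < r)
    (α δ : ℝ → ℝ)
    (hα : ContDiffOn ℝ 2 α (Set.Ici (-L)))
    (hαbd : ∃ C, ∀ x, -L ≤ x → |α x| ≤ C)
    (hα0 : α 0 = 0) (hα'0 : deriv α 0 < 0)
    (hαr : ∀ x ∈ Set.Icc (-L) H, r * |x| ≤ |α x|)
    (hδ : ContDiffOn ℝ 1 δ (Set.Ici (-L)))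
    (hδbd : ∃ C, ∀ x, -L ≤ x → |δ x| ≤ C)
    (θ : ℝ)
    (A A' B B' : ℝ → ℂ)
    (hA : ∀ x, -L ≤ x → HasDerivAt A (A' x) x)
    (hA' : ∀ x, -L ≤ x → HasDerivAt A' (-(α x : ℂ) * A x) x)
    (hB : ∀ x, -L ≤ x → HasDerivAt B (B' x) x)
    (hB' : ∀ x, -L ≤ x → HasDerivAt B' (-(α x : ℂ) * B x) x)
    (hA0 : A 0 = 1) (hA'0 : A' 0 = 0) (hB0 : B 0 = 0) (hB'0 : B' 0 = 1) :
    ∃ M > 0, ∀ x z : ℝ, x ∈ Set.Icc (-L) H →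
      ((0 ≤ z ∧ z ≤ x) ∨ (x ≤ z ∧ z ≤ 0)) →
      ‖DxDzk δ θ A A' B B' x z‖ ≤ M * |α x|
      ∧ (x ≠ 0 → ‖DxDzk δ θ A A' B B' x z / (α x : ℂ)‖ ≤ M) :=
  limit_kernel_bounded_general L H r hL hH hr α δ hα hαr hδ θ A A' B B' hA hA' hB hB'
end

section
/- For every compact interval [θ₋, θ₊] ⊂ ℝ there exists a constant C > 0 such that for every θ ∈ [θ₋, θ₊] and every ν ∈ (0,1], the first basis function 𝐔₁^{θ,ν} = (U₁, V₁, W₁) satisfies ‖U₁‖_{L^∞(-L,H)} + ‖V₁‖_{L^∞(-L,H)} + ‖W₁‖_{L^∞(-L,H)} ≤ C; in particular the bound is uniform in ν. -/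
/-!
Eliminating `U` through the algebraic equation gives `(α + iν) U = -i Z` for the flux
`Z = δ V - θ W`, whose derivative `δ' V + δ W + θ (α + iν) V` no longer involves `U`. The initial
values force `Z 0 = 0`, so `‖Z x‖ ≲ ∫₀ˣ (‖V‖ + ‖W‖)`, and since `‖α x + iν‖ ≥ r |x|` for every `ν`,
`|x| ‖U x‖` is controlled by the same integral. Inserted into the equations for `V'` and `W'`, this
closes a Grönwall argument whose constants only involve `r` and bounds on `α`, `δ`, `δ'`, `θ` and
`ν ≤ 1`. Negative `x` reduce to positive ones by the reflection symmetry `x ↦ -x` of the system.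
-/

open Complex Set MeasureTheory intervalIntegral
open scoped Pointwise

theorem HasDerivAt.comp_neg {E : Type*} [NormedAddCommGroup E] [NormedSpace ℝ E]
    {f : ℝ → E} {f' : E} {x : ℝ} (h : HasDerivAt f f' (-x)) :
    HasDerivAt (fun y => f (-y)) (-f') x := by
  simpa [Function.comp_def] using h.scomp x (hasDerivAt_neg x)

theorem hasDerivWithinAt_integral_of_continuousOn {E : Type*} [NormedAddCommGroup E]
    [NormedSpace ℝ E] [CompleteSpace E] {g : ℝ → E} {a b x : ℝ}
    (hg : ContinuousOn g (Icc a b)) (hx : x ∈ Ico a b) :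
    HasDerivWithinAt (fun y => ∫ t in a..y, g t) (g x) (Ici x) x := by
  have : Fact (x ∈ Icc a b) := ⟨Ico_subset_Icc_self hx⟩
  have hint : IntervalIntegrable g volume a x :=
    (hg.mono (Icc_subset_Icc le_rfl hx.2.le)).intervalIntegrable_of_Icc hx.1
  exact (integral_hasDerivWithinAt_right hint
    (hg.stronglyMeasurableAtFilter_nhdsWithin measurableSet_Icc x)
    (hg x (Ico_subset_Icc_self hx))).mono_of_mem_nhdsWithin (Icc_mem_nhdsGE_of_mem hx)

theorem add_le_mul_exp_of_le_integral {φ u : ℝ → ℝ} {a b c : ℝ} (ha : 0 ≤ a) (hc : 0 ≤ c)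
    (hφ : ContinuousOn φ (Icc 0 b)) (hu : ContinuousOn u (Icc 0 b))
    (hφ_nonneg : ∀ x ∈ Icc 0 b, 0 ≤ φ x) (hu_nonneg : ∀ x ∈ Icc 0 b, 0 ≤ u x)
    (hu₀ : u 0 ≤ c * φ 0) (hu_le : ∀ x ∈ Icc 0 b, x * u x ≤ c * ∫ t in 0..x, φ t)
    (hφ_le : ∀ x ∈ Icc 0 b, φ x ≤ φ 0 + a * ∫ t in 0..x, (φ t + u t)) :
    ∀ x ∈ Icc 0 b, φ x + u x ≤ (1 + c) * φ 0 * Real.exp (a * (1 + c) * x) := by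
  -- `M` dominates `φ` by hypothesis, and `u` by `c * M` since `M` is nondecreasing.
  set M : ℝ → ℝ := fun x => φ 0 + a * ∫ t in 0..x, (φ t + u t) with hM
  have hφu : ContinuousOn (fun t => φ t + u t) (Icc 0 b) := hφ.add hu
  have hM_mono : ∀ x ∈ Icc 0 b, ∀ y ∈ Icc 0 b, x ≤ y → M x ≤ M y := by
    intro x hx y hy hxy
    have hnonneg : ∀ t ∈ Ioc 0 y, 0 ≤ φ t + u t := fun t ht =>
      add_nonneg (hφ_nonneg t ⟨ht.1.le, ht.2.trans hy.2⟩) (hu_nonneg t ⟨ht.1.le, ht.2.trans hy.2⟩)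
    have hint := integral_mono_interval (μ := volume) le_rfl hx.1 hxy
      ((ae_restrict_iff' measurableSet_Ioc).2 (Filter.Eventually.of_forall hnonneg))
      ((hφu.mono (Icc_subset_Icc le_rfl hy.2)).intervalIntegrable_of_Icc hy.1)
    exact add_le_add_right (mul_le_mul_of_nonneg_left hint ha) _
  have hu_M : ∀ x ∈ Icc 0 b, u x ≤ c * M x := by
    intro x hx
    rcases hx.1.eq_or_lt with rfl | hx0
    · simpa [hM] using hu₀
    have hφ_int : ∫ t in 0..x, φ t ≤ ∫ t in 0..x, M x := by
      refine integral_mono_on hx.1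
        ((hφ.mono (Icc_subset_Icc le_rfl hx.2)).intervalIntegrable_of_Icc hx.1)
        intervalIntegrable_const fun t ht => ?_
      have ht' : t ∈ Icc 0 b := ⟨ht.1, ht.2.trans hx.2⟩
      exact (hφ_le t ht').trans (hM_mono t ht' x hx ht.2)
    rw [intervalIntegral.integral_const, smul_eq_mul, sub_zero] at hφ_int
    have := (hu_le x hx).trans (mul_le_mul_of_nonneg_left hφ_int hc)
    nlinarith
  have hM_le : ∀ x ∈ Icc 0 b, M x ≤ gronwallBound (φ 0) (a * (1 + c)) 0 (x - 0) := by
    refine le_gronwallBound_of_liminf_deriv_right_le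
      (f' := fun x => a * (φ x + u x)) ?_ (fun x hx r hr => ?_) (by simp [hM]) fun x hx => ?_
    · rcases le_or_gt 0 b with hb | hb
      · rw [← uIcc_of_le hb] at hφu ⊢
        exact continuousOn_const.add (continuousOn_const.mul
          (continuousOn_primitive_interval' hφu.intervalIntegrable left_mem_uIcc))
      · simp [Icc_eq_empty_of_lt hb]
    · exact (((hasDerivWithinAt_integral_of_continuousOn hφu hx).const_mul a).const_add
        (φ 0)).liminf_right_slope_le hr
    · have hx' := Ico_subset_Icc_self hx
      nlinarith [hφ_le x hx', hu_M x hx']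
  intro x hx
  have hMx := hM_le x hx
  rw [gronwallBound_ε0, sub_zero] at hMx
  nlinarith [hφ_le x hx, hu_M x hx]

theorem norm_sub_le_integral_of_hasDerivAt {E : Type*} [NormedAddCommGroup E]
    [NormedSpace ℝ E] {f f' : ℝ → E} {B : ℝ → ℝ} {a b : ℝ}
    (hf : ∀ x ∈ Icc a b, HasDerivAt f (f' x) x) (hB : ContinuousOn B (Icc a b))
    (hfB : ∀ x ∈ Icc a b, ‖f' x‖ ≤ B x) :
    ∀ x ∈ Icc a b, ‖f x - f a‖ ≤ ∫ t in a..x, B t := by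
  intro x hx
  have hsub : Icc a x ⊆ Icc a b := Icc_subset_Icc le_rfl hx.2
  refine norm_sub_le_integral_of_norm_deriv_le_of_le hx.1
    (fun t ht => (hf t (hsub ht)).continuousAt.continuousWithinAt)
    (fun t ht => (hf t (hsub (Ioo_subset_Icc_self ht))).differentiableAt.differentiableWithinAt)
    (Filter.Eventually.of_forall fun t ht => ?_)
    ((hB.mono hsub).intervalIntegrable_of_Icc hx.1)
  rw [(hf t (hsub (Ioo_subset_Icc_self ht))).deriv]
  exact hfB t (hsub (Ioo_subset_Icc_self ht))

theorem norm_ofReal_add_I_mul_le (a b : ℝ) : ‖(a : ℂ) + I * b‖ ≤ |a| + |b| := by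
  simpa using norm_add_le (a : ℂ) (I * b)

theorem ofReal_add_I_mul_ne_zero (a : ℝ) {b : ℝ} (hb : b ≠ 0) : (a : ℂ) + I * b ≠ 0 :=
  fun h => hb (by simpa using congrArg im h)

theorem abs_le_norm_ofReal_add_I_mul (a b : ℝ) : |a| ≤ ‖(a : ℂ) + I * b‖ := by
  simpa using abs_re_le_norm ((a : ℂ) + I * b)

def XModeSystem (α δ : ℝ → ℝ) (θ ν : ℝ) (U V W : ℝ → ℂ) (s : Set ℝ) : Prop :=
  ∀ x ∈ s, HasDerivAt V (W x + I * θ * U x) x ∧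
    I * θ * W x - (α x + I * ν) * U x - I * δ x * V x = 0 ∧
    HasDerivAt W (I * δ x * U x - (α x + I * ν) * V x) x

/-- The bound of `add_le_mul_exp_of_le_integral` with `a = 2 (K + 1)`, `c = K (K + 2) / r` and
`‖V 0‖ + ‖W 0‖ ≤ 2 K`. -/
noncomputable def xModeBound (K r x : ℝ) : ℝ :=
  (1 + K * (K + 2) / r) * (2 * K) * Real.exp (2 * (K + 1) * (1 + K * (K + 2) / r) * x)

theorem xModeBound_nonneg {K r : ℝ} (hK : 0 ≤ K) (hr : 0 ≤ r) (x : ℝ) : 0 ≤ xModeBound K r x := by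
  unfold xModeBound; positivity

theorem xModeBound_mono {K r : ℝ} (hK : 0 ≤ K) (hr : 0 ≤ r) : Monotone (xModeBound K r) :=
  fun x y hxy => by unfold xModeBound; gcongr

theorem norm_deriv_flux_le {a d d' θ ν K : ℝ} (ha : |a| ≤ K) (hd : |d| ≤ K) (hd' : |d'| ≤ K)
    (hθ : |θ| ≤ K) (hν : |ν| ≤ 1) (v w : ℂ) :
    ‖(d' : ℂ) * v + d * w + θ * (a + I * ν) * v‖ ≤ K * (K + 2) * (‖v‖ + ‖w‖) := by
  have hA := (norm_ofReal_add_I_mul_le a ν).trans (add_le_add ha hν)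
  have hK0 : 0 ≤ K := (abs_nonneg θ).trans hθ
  calc _ ≤ ‖(d' : ℂ)‖ * ‖v‖ + ‖(d : ℂ)‖ * ‖w‖ + ‖(θ : ℂ)‖ * ‖(a : ℂ) + I * ν‖ * ‖v‖ := by
        refine norm_add₃_le.trans (le_of_eq ?_)
        simp only [norm_mul]
    _ ≤ K * ‖v‖ + K * ‖w‖ + K * (K + 1) * ‖v‖ := by
        simp only [norm_real, Real.norm_eq_abs]; gcongr
    _ ≤ K * (K + 2) * (‖v‖ + ‖w‖) := by
        nlinarith [mul_nonneg (mul_nonneg hK0 (by linarith : 0 ≤ K + 1)) (norm_nonneg w)]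

theorem norm_derivs_le {a d θ ν K : ℝ} (ha : |a| ≤ K) (hd : |d| ≤ K) (hθ : |θ| ≤ K)
    (hν : |ν| ≤ 1) (u v w : ℂ) :
    ‖w + I * θ * u‖ ≤ (K + 1) * (‖v‖ + ‖w‖ + ‖u‖) ∧
      ‖I * d * u - (a + I * ν) * v‖ ≤ (K + 1) * (‖v‖ + ‖w‖ + ‖u‖) := by
  have hA := (norm_ofReal_add_I_mul_le a ν).trans (add_le_add ha hν)
  have hK0 : 0 ≤ K := (abs_nonneg θ).trans hθ
  have hu := norm_nonneg u
  have hv := norm_nonneg v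
  have hw := norm_nonneg w
  constructor
  · calc _ ≤ ‖w‖ + |θ| * ‖u‖ := by simpa using norm_add_le w (I * θ * u)
      _ ≤ _ := by nlinarith
  · calc _ ≤ |d| * ‖u‖ + ‖(a : ℂ) + I * ν‖ * ‖v‖ := by
          simpa using norm_sub_le (I * d * u) ((a + I * ν) * v)
      _ ≤ _ := by nlinarith [mul_le_mul_of_nonneg_right hA hv]

namespace XModeSystem

variable {α δ δ' : ℝ → ℝ} {θ ν K r b : ℝ} {U V W : ℝ → ℂ} {s t : Set ℝ}

theorem mono (h : XModeSystem α δ θ ν U V W s) (hts : t ⊆ s) : XModeSystem α δ θ ν U V W t :=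
  fun x hx => h x (hts hx)

theorem comp_neg (h : XModeSystem α δ θ ν U V W s) :
    XModeSystem (fun x => α (-x)) (fun x => -δ (-x)) θ ν (fun x => -U (-x)) (fun x => V (-x))
      (fun x => -W (-x)) (-s) := by
  intro x hx
  obtain ⟨hV, hU, hW⟩ := h (-x) hx
  refine ⟨?_, ?_, ?_⟩
  · exact hV.comp_neg.congr_deriv (by ring)
  · push_cast
    linear_combination -hU
  · exact hW.comp_neg.fun_neg.congr_deriv (by push_cast; ring)

theorem continuousOn_V (h : XModeSystem α δ θ ν U V W s) : ContinuousOn V s :=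
  fun x hx => (h x hx).1.continuousAt.continuousWithinAt

theorem continuousOn_W (h : XModeSystem α δ θ ν U V W s) : ContinuousOn W s :=
  fun x hx => (h x hx).2.2.continuousAt.continuousWithinAt

theorem mul_U_eq (h : XModeSystem α δ θ ν U V W s) {x : ℝ} (hx : x ∈ s) :
    (α x + I * ν) * U x = -I * (δ x * V x - θ * W x) := by
  linear_combination -(h x hx).2.1

theorem norm_mul_norm_U_eq (h : XModeSystem α δ θ ν U V W s) {x : ℝ} (hx : x ∈ s) :
    ‖(α x : ℂ) + I * ν‖ * ‖U x‖ = ‖(δ x : ℂ) * V x - θ * W x‖ := by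
  rw [← norm_mul, h.mul_U_eq hx, norm_mul, norm_neg, norm_I, one_mul]

theorem continuousOn_U (h : XModeSystem α δ θ ν U V W s) (hα : ContinuousOn α s)
    (hδ : ContinuousOn δ s) (hν : ν ≠ 0) : ContinuousOn U s := by
  have hV := h.continuousOn_V
  have hW := h.continuousOn_W
  have hα' : ContinuousOn (fun x => (α x : ℂ)) s := continuous_ofReal.comp_continuousOn hα
  have hδ' : ContinuousOn (fun x => (δ x : ℂ)) s := continuous_ofReal.comp_continuousOn hδ
  have hZ : ContinuousOn (fun x => -I * ((δ x : ℂ) * V x - θ * W x)) s := by fun_prop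
  have hZA : ContinuousOn (fun x => -I * ((δ x : ℂ) * V x - θ * W x) / ((α x : ℂ) + I * ν)) s :=
    hZ.div (hα'.add continuousOn_const) fun x _ => ofReal_add_I_mul_ne_zero _ hν
  refine hZA.congr fun x hx => ?_
  rw [eq_div_iff (ofReal_add_I_mul_ne_zero _ hν), mul_comm, h.mul_U_eq hx]

theorem hasDerivAt_flux (h : XModeSystem α δ θ ν U V W s) {x : ℝ} (hx : x ∈ s)
    (hδ : HasDerivAt δ (δ' x) x) :
    HasDerivAt (fun y => (δ y : ℂ) * V y - θ * W y)
      (δ' x * V x + δ x * W x + θ * (α x + I * ν) * V x) x := by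
  obtain ⟨hV, -, hW⟩ := h x hx
  exact ((hδ.ofReal_comp.fun_mul hV).fun_sub (hW.const_mul (θ : ℂ))).congr_deriv (by ring)

theorem mul_norm_U_le (h : XModeSystem α δ θ ν U V W (Icc 0 b)) (hr : 0 < r)
    (hαr : ∀ x ∈ Icc 0 b, r * x ≤ |α x|) (hδ : ∀ x ∈ Icc 0 b, HasDerivAt δ (δ' x) x)
    (hK : ∀ x ∈ Icc 0 b, |α x| ≤ K ∧ |δ x| ≤ K ∧ |δ' x| ≤ K) (hθ : |θ| ≤ K) (hν : |ν| ≤ 1)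
    (hV₀ : V 0 = I * θ) (hW₀ : W 0 = I * δ 0) :
    ∀ x ∈ Icc 0 b, x * ‖U x‖ ≤ K * (K + 2) / r * ∫ t in 0..x, (‖V t‖ + ‖W t‖) := by
  have hV := h.continuousOn_V
  have hW := h.continuousOn_W
  have hflux := norm_sub_le_integral_of_hasDerivAt (B := fun t => K * (K + 2) * (‖V t‖ + ‖W t‖))
    (fun x hx => h.hasDerivAt_flux hx (hδ x hx))
    (continuousOn_const.mul (hV.norm.add hW.norm))
    fun x hx => norm_deriv_flux_le (hK x hx).1 (hK x hx).2.1 (hK x hx).2.2 hθ hν _ _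
  intro x hx
  have hZ := hflux x hx
  rw [intervalIntegral.integral_const_mul, hV₀, hW₀] at hZ
  have hZ₀ : (δ 0 : ℂ) * (I * θ) - θ * (I * δ 0) = 0 := by ring
  rw [hZ₀, sub_zero, ← h.norm_mul_norm_U_eq hx] at hZ
  rw [div_mul_eq_mul_div, le_div_iff₀ hr]
  calc x * ‖U x‖ * r = r * x * ‖U x‖ := by ring
    _ ≤ ‖(α x : ℂ) + I * ν‖ * ‖U x‖ := by
        gcongr
        exact (hαr x hx).trans (abs_le_norm_ofReal_add_I_mul _ _)
    _ ≤ _ := hZ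

theorem norm_add_norm_le (h : XModeSystem α δ θ ν U V W (Icc 0 b)) (hU : ContinuousOn U (Icc 0 b))
    (hK : ∀ x ∈ Icc 0 b, |α x| ≤ K ∧ |δ x| ≤ K) (hθ : |θ| ≤ K) (hν : |ν| ≤ 1) :
    ∀ x ∈ Icc 0 b, ‖V x‖ + ‖W x‖ ≤
      ‖V 0‖ + ‖W 0‖ + 2 * (K + 1) * ∫ t in 0..x, (‖V t‖ + ‖W t‖ + ‖U t‖) := by
  have hV := h.continuousOn_V
  have hW := h.continuousOn_W
  have hB : ContinuousOn (fun t => (K + 1) * (‖V t‖ + ‖W t‖ + ‖U t‖)) (Icc 0 b) :=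
    continuousOn_const.mul ((hV.norm.add hW.norm).add hU.norm)
  have hVB := norm_sub_le_integral_of_hasDerivAt (fun x hx => (h x hx).1) hB
    fun x hx => (norm_derivs_le (hK x hx).1 (hK x hx).2 hθ hν _ (V x) _).1
  have hWB := norm_sub_le_integral_of_hasDerivAt (fun x hx => (h x hx).2.2) hB
    fun x hx => (norm_derivs_le (hK x hx).1 (hK x hx).2 hθ hν _ _ (W x)).2
  intro x hx
  have hVx := hVB x hx
  have hWx := hWB x hx
  rw [intervalIntegral.integral_const_mul] at hVx hWx
  linarith [norm_le_norm_add_norm_sub' (V x) (V 0), norm_le_norm_add_norm_sub' (W x) (W 0)]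

theorem norm_add_le_xModeBound_of_Icc (h : XModeSystem α δ θ ν U V W (Icc 0 b)) (hr : 0 < r)
    (hα : ContinuousOn α (Icc 0 b)) (hαr : ∀ x ∈ Icc 0 b, r * x ≤ |α x|)
    (hδ : ∀ x ∈ Icc 0 b, HasDerivAt δ (δ' x) x)
    (hK : ∀ x ∈ Icc 0 b, |α x| ≤ K ∧ |δ x| ≤ K ∧ |δ' x| ≤ K) (hθ : |θ| ≤ K) (hν : ν ∈ Ioc 0 1)
    (hV₀ : V 0 = I * θ) (hW₀ : W 0 = I * δ 0) :
    ∀ x ∈ Icc 0 b, ‖U x‖ + ‖V x‖ + ‖W x‖ ≤ xModeBound K r x := by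
  intro x hx
  have h0 : (0 : ℝ) ∈ Icc 0 b := ⟨le_rfl, hx.1.trans hx.2⟩
  have hK0 : 0 ≤ K := (abs_nonneg θ).trans hθ
  have hν' : |ν| ≤ 1 := by rw [abs_of_pos hν.1]; exact hν.2
  have hV := h.continuousOn_V
  have hW := h.continuousOn_W
  have hU := h.continuousOn_U hα (fun x hx => (hδ x hx).continuousAt.continuousWithinAt) hν.1.ne'
  have hU₀ : U 0 = 0 := by
    have h₀ := h.mul_U_eq h0
    rw [hV₀, hW₀, show (δ 0 : ℂ) * (I * θ) - θ * (I * δ 0) = 0 by ring, mul_zero] at h₀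
    exact (mul_eq_zero.1 h₀).resolve_left (ofReal_add_I_mul_ne_zero _ hν.1.ne')
  have hφ₀ : ‖V 0‖ + ‖W 0‖ ≤ 2 * K := by
    simp only [hV₀, hW₀, norm_mul, norm_I, norm_real, Real.norm_eq_abs, one_mul]
    linarith [(hK 0 h0).2.1]
  have hgron := add_le_mul_exp_of_le_integral (φ := fun t => ‖V t‖ + ‖W t‖) (u := fun t => ‖U t‖)
    (by positivity : 0 ≤ 2 * (K + 1)) (by positivity : 0 ≤ K * (K + 2) / r)
    (hV.norm.add hW.norm) hU.norm (fun _ _ => by positivity) (fun _ _ => norm_nonneg _)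
    (by simp only [hU₀, norm_zero]; positivity)
    (h.mul_norm_U_le hr hαr hδ hK hθ hν' hV₀ hW₀)
    (h.norm_add_norm_le hU (fun x hx => ⟨(hK x hx).1, (hK x hx).2.1⟩) hθ hν') x hx
  calc ‖U x‖ + ‖V x‖ + ‖W x‖ = ‖V x‖ + ‖W x‖ + ‖U x‖ := by ring
    _ ≤ _ := hgron
    _ ≤ xModeBound K r x := by unfold xModeBound; gcongr

theorem norm_add_le_xModeBound (h : XModeSystem α δ θ ν U V W s) (hs : s.OrdConnected)
    (h0 : 0 ∈ s) (hr : 0 < r) (hα : ContinuousOn α s) (hαr : ∀ x ∈ s, r * |x| ≤ |α x|)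
    (hδ : ∀ x ∈ s, HasDerivAt δ (δ' x) x) (hK : ∀ x ∈ s, |α x| ≤ K ∧ |δ x| ≤ K ∧ |δ' x| ≤ K)
    (hθ : |θ| ≤ K) (hν : ν ∈ Ioc 0 1) (hV₀ : V 0 = I * θ) (hW₀ : W 0 = I * δ 0) :
    ∀ x ∈ s, ‖U x‖ + ‖V x‖ + ‖W x‖ ≤ xModeBound K r |x| := by
  intro x hx
  rcases le_total 0 x with hx0 | hx0
  · have hsub : Icc 0 x ⊆ s := hs.out h0 hx
    rw [abs_of_nonneg hx0]
    exact (h.mono hsub).norm_add_le_xModeBound_of_Icc hr (hα.mono hsub)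
      (fun t ht => by simpa [abs_of_nonneg ht.1] using hαr t (hsub ht))
      (fun t ht => hδ t (hsub ht)) (fun t ht => hK t (hsub ht)) hθ hν hV₀ hW₀ x ⟨hx0, le_rfl⟩
  · have hsub : Icc 0 (-x) ⊆ -s := fun t ht =>
      hs.out hx h0 ⟨by linarith [ht.2], by linarith [ht.1]⟩
    have hbound := (h.comp_neg.mono hsub).norm_add_le_xModeBound_of_Icc (δ' := fun t => δ' (-t)) hr
      (hα.comp continuous_neg.continuousOn fun t ht => hsub ht)
      (fun t ht => by simpa [abs_of_nonneg ht.1] using hαr (-t) (hsub ht))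
      (fun t ht => by simpa using (hδ (-t) (hsub ht)).comp_neg.fun_neg)
      (fun t ht => by simpa using hK (-t) (hsub ht)) hθ hν (by simpa using hV₀)
      (by simp [hW₀]) (-x) ⟨by linarith, le_rfl⟩
    simpa [abs_of_nonpos hx0] using hbound

end XModeSystem

theorem first_basis_function_uniformly_bounded_general
    (L H r : ℝ) (hL : 0 < L) (hH : 0 < H) (hr : 0 < r)
    (α δ : ℝ → ℝ)
    (hα : ContDiffOn ℝ 2 α (Set.Ici (-L)))
    (hαbd : ∃ C, ∀ x, -L ≤ x → |α x| ≤ C)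
    (hαr : ∀ x ∈ Set.Icc (-L) H, r * |x| ≤ |α x|)
    (hδ : ContDiffOn ℝ 1 δ (Set.Ici (-L)))
    (hδbd : ∃ C, ∀ x, -L ≤ x → |δ x| ≤ C)
    (θm θp : ℝ)
    -- the family (θ,ν) ↦ 𝐔₁^{θ,ν} of first basis functions
    (U₁ V₁ W₁ : ℝ → ℝ → ℝ → ℂ)
    (hsys : ∀ θ ∈ Set.Icc θm θp, ∀ ν ∈ Set.Ioc (0:ℝ) 1,
      (∀ x, -L ≤ x → HasDerivAt (V₁ θ ν)
        (W₁ θ ν x + Complex.I * (θ : ℂ) * U₁ θ ν x) x) ∧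
      (∀ x, -L ≤ x →
        Complex.I * (θ : ℂ) * W₁ θ ν x
          - ((α x : ℂ) + Complex.I * (ν : ℂ)) * U₁ θ ν x
          - Complex.I * (δ x : ℂ) * V₁ θ ν x = 0) ∧
      (∀ x, -L ≤ x → HasDerivAt (W₁ θ ν)
        (Complex.I * (δ x : ℂ) * U₁ θ ν x
          - ((α x : ℂ) + Complex.I * (ν : ℂ)) * V₁ θ ν x) x) ∧
      V₁ θ ν 0 = Complex.I * (θ : ℂ) ∧ W₁ θ ν 0 = Complex.I * (δ 0 : ℂ)) :
    ∃ C > 0, ∀ θ ∈ Set.Icc θm θp, ∀ ν ∈ Set.Ioc (0:ℝ) 1, ∀ x ∈ Set.Ioo (-L) H,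
      ‖U₁ θ ν x‖ + ‖V₁ θ ν x‖ + ‖W₁ θ ν x‖ ≤ C := by
  obtain ⟨Ca, hCa⟩ := hαbd
  obtain ⟨Cd, hCd⟩ := hδbd
  obtain ⟨Ce, hCe⟩ := isCompact_Icc.exists_bound_of_continuousOn
    ((hδ.continuousOn_derivWithin (uniqueDiffOn_Ici _) le_rfl).mono
      fun y (hy : y ∈ Icc (-L) H) => hy.1)
  set K := max (max Ca Cd) (max Ce (max |θm| |θp|))
  have hK0 : 0 ≤ K := le_max_of_le_right (le_max_of_le_right (le_max_of_le_left (abs_nonneg θm)))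
  refine ⟨xModeBound K r (max L H) + 1, by linarith [xModeBound_nonneg hK0 hr.le (max L H)],
    fun θ hθ ν hν x hx => ?_⟩
  obtain ⟨hV, hU, hW, hV₀, hW₀⟩ := hsys θ hθ ν hν
  have hsys' : XModeSystem α δ θ ν (U₁ θ ν) (V₁ θ ν) (W₁ θ ν) (Ioo (-L) H) :=
    fun y hy => ⟨hV y hy.1.le, hU y hy.1.le, hW y hy.1.le⟩
  have hδ' : ∀ y ∈ Ioo (-L) H, HasDerivAt δ (derivWithin δ (Ici (-L)) y) y := fun y hy =>
    (hδ.differentiableOn one_ne_zero y hy.1.le).hasDerivWithinAt.hasDerivAt (Ici_mem_nhds hy.1)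
  have hK : ∀ y ∈ Ioo (-L) H,
      |α y| ≤ K ∧ |δ y| ≤ K ∧ |derivWithin δ (Ici (-L)) y| ≤ K := fun y hy =>
    ⟨(hCa y hy.1.le).trans (le_max_of_le_left (le_max_left _ _)),
      (hCd y hy.1.le).trans (le_max_of_le_left (le_max_right _ _)),
      (hCe y (Ioo_subset_Icc_self hy)).trans (le_max_of_le_right (le_max_left _ _))⟩
  have hθK : |θ| ≤ K := (abs_le_max_abs_abs hθ.1 hθ.2).trans (le_max_of_le_right (le_max_right _ _))
  have hbound := hsys'.norm_add_le_xModeBound ordConnected_Ioo ⟨neg_neg_of_pos hL, hH⟩ hr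
    (hα.continuousOn.mono fun y hy => hy.1.le) (fun y hy => hαr y (Ioo_subset_Icc_self hy))
    hδ' hK hθK hν hV₀ hW₀ x hx
  have hx_le : |x| ≤ max L H :=
    abs_le.2 ⟨by linarith [hx.1, le_max_left L H], hx.2.le.trans (le_max_right L H)⟩
  linarith [xModeBound_mono hK0 hr.le hx_le]

/-- Uniform `L^∞(-L,H)` bound of the first basis function `𝐔₁^{θ,ν}`, uniformly
over `θ` in a compact interval and `ν ∈ (0,1]` (Proposition 5.3 of the paper). -/
theorem first_basis_function_uniformly_bounded
    (L H r : ℝ) (hL : 0 < L) (hH : 0 < H) (hr : 0 < r)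
    (α δ : ℝ → ℝ)
    (hα : ContDiffOn ℝ 2 α (Set.Ici (-L)))
    (hαbd : ∃ C, ∀ x, -L ≤ x → |α x| ≤ C)
    (hα0 : α 0 = 0) (hα'0 : deriv α 0 < 0)
    (hαr : ∀ x ∈ Set.Icc (-L) H, r * |x| ≤ |α x|)
    (hδ : ContDiffOn ℝ 1 δ (Set.Ici (-L)))
    (hδbd : ∃ C, ∀ x, -L ≤ x → |δ x| ≤ C)
    (hδ0 : δ 0 ≠ 0)
    (θm θp : ℝ)
    -- the family (θ,ν) ↦ 𝐔₁^{θ,ν} of first basis functions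
    (U₁ V₁ W₁ : ℝ → ℝ → ℝ → ℂ)
    (hsys : ∀ θ ∈ Set.Icc θm θp, ∀ ν ∈ Set.Ioc (0:ℝ) 1,
      (∀ x, -L ≤ x → HasDerivAt (V₁ θ ν)
        (W₁ θ ν x + Complex.I * (θ : ℂ) * U₁ θ ν x) x) ∧
      (∀ x, -L ≤ x →
        Complex.I * (θ : ℂ) * W₁ θ ν x
          - ((α x : ℂ) + Complex.I * (ν : ℂ)) * U₁ θ ν x
          - Complex.I * (δ x : ℂ) * V₁ θ ν x = 0) ∧
      (∀ x, -L ≤ x → HasDerivAt (W₁ θ ν)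
        (Complex.I * (δ x : ℂ) * U₁ θ ν x
          - ((α x : ℂ) + Complex.I * (ν : ℂ)) * V₁ θ ν x) x) ∧
      V₁ θ ν 0 = Complex.I * (θ : ℂ) ∧ W₁ θ ν 0 = Complex.I * (δ 0 : ℂ)) :
    ∃ C > 0, ∀ θ ∈ Set.Icc θm θp, ∀ ν ∈ Set.Ioc (0:ℝ) 1, ∀ x ∈ Set.Ioo (-L) H,
      ‖U₁ θ ν x‖ + ‖V₁ θ ν x‖ + ‖W₁ θ ν x‖ ≤ C :=
  first_basis_function_uniformly_bounded_general L H r hL hH hr α δ hα hαbd hαr hδ hδbd θm θp U₁ V₁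
    W₁ hsys
end

section
/- Let θ ∈ ℝ, ν ∈ ℝ, α∞ < 0 and δ∞ ∈ ℝ with α∞² − δ∞² > 0, and consider the constant matrix A∞ = [[θδ∞/(α∞+iν), 1 − θ²/(α∞+iν)], [δ∞²/(α∞+iν) − α∞ − iν, −θδ∞/(α∞+iν)]] ∈ M₂(ℂ). Then det A∞ = α∞ + iν − θ² − δ∞²/(α∞+iν), its real part satisfies Re(det A∞) = α∞(1 − δ∞²/(α∞²+ν²)) − θ² < 0, and A∞ has exactly two distinct eigenvalues λ and −λ, where λ is the principal square root of −det A∞ and has strictly positive real part. -/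
open Complex

lemma cpow_half_re_pos {w : ℂ} (hw : 0 < w.re) : 0 < (w ^ ((1:ℂ)/2)).re := by
  have hw0 : w ≠ 0 := by
    intro h; rw [h] at hw; simp at hw
  rw [Complex.cpow_def_of_ne_zero hw0, Complex.exp_re]
  have him : (Complex.log w * ((1:ℂ)/2)).im = w.arg / 2 := by
    simp [Complex.mul_im, Complex.log_im]
    ring
  rw [him]
  have harg : |w.arg| < Real.pi / 2 :=
    Complex.abs_arg_lt_pi_div_two_iff.2 (Or.inl hw)
  have := abs_lt.1 harg
  have hcos : 0 < Real.cos (w.arg / 2) :=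
    Real.cos_pos_of_mem_Ioo ⟨by nlinarith [Real.pi_pos], by nlinarith [Real.pi_pos]⟩
  exact mul_pos (Real.exp_pos _) hcos

/-- The constant-coefficient matrix of the Fourier X-mode system at infinity:
its determinant, the sign of the real part of the determinant under the
coercivity assumption `α∞² − δ∞² > 0`, `α∞ < 0`, and its two distinct
eigenvalues `±λ` where `λ` is the principal square root of `−det A∞` and has
strictly positive real part. -/
theorem matrix_at_infinity_eigenvalues
    (θ ν αi δi : ℝ) (hαi : αi < 0) (hcoerc : δi^2 < αi^2)
    (z : ℂ) (hz : z = (αi : ℂ) + Complex.I * (ν : ℂ))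
    (Ainf : Matrix (Fin 2) (Fin 2) ℂ)
    (hAinf : Ainf = !![(θ : ℂ) * (δi : ℂ) / z, 1 - (θ : ℂ)^2 / z;
                       (δi : ℂ)^2 / z - z, -((θ : ℂ) * (δi : ℂ) / z)])
    (lam : ℂ) (hlam : lam = (-Ainf.det) ^ ((1:ℂ)/2)) :
    Ainf.det = z - (θ : ℂ)^2 - (δi : ℂ)^2 / z
    ∧ (Ainf.det).re = αi * (1 - δi^2 / (αi^2 + ν^2)) - θ^2
    ∧ (Ainf.det).re < 0
    ∧ 0 < lam.re
    ∧ lam ≠ -lam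
    ∧ spectrum ℂ Ainf = {lam, -lam} := by
  have hzre : z.re = αi := by rw [hz]; simp
  have hzim : z.im = ν := by rw [hz]; simp
  have hz0 : z ≠ 0 := by
    intro h
    rw [h] at hzre
    simp at hzre
    exact absurd hzre.symm (ne_of_lt hαi)
  -- determinant
  have hdet : Ainf.det = z - (θ : ℂ)^2 - (δi : ℂ)^2 / z := by
    rw [hAinf, Matrix.det_fin_two_of]
    field_simp
    ring
  -- normSq
  have hns : Complex.normSq z = αi^2 + ν^2 := by
    rw [Complex.normSq_apply, hzre, hzim]; ring
  have hnspos : (0:ℝ) < αi^2 + ν^2 := by nlinarith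
  -- real part
  have hre : (Ainf.det).re = αi * (1 - δi^2 / (αi^2 + ν^2)) - θ^2 := by
    rw [hdet]
    simp only [Complex.sub_re, Complex.div_re, hns, hzre, hzim,
      ← Complex.ofReal_pow, Complex.ofReal_re, Complex.ofReal_im]
    field_simp
    ring
  -- negativity
  have hneg : (Ainf.det).re < 0 := by
    rw [hre]
    have h1 : δi^2 / (αi^2 + ν^2) < 1 := by
      rw [div_lt_one hnspos]; nlinarith
    nlinarith
  -- lam
  have hwre : 0 < (-Ainf.det).re := by simpa using hneg
  have hlre : 0 < lam.re := hlam ▸ cpow_half_re_pos hwre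
  have hw0 : -Ainf.det ≠ 0 := by
    intro h; rw [h] at hwre; simp at hwre
  have hlam2 : lam ^ 2 = -Ainf.det := by
    rw [hlam, sq, ← Complex.cpow_add _ _ hw0]
    norm_num
  have hlne : lam ≠ -lam := by
    intro h
    have : lam = 0 := by
      have := (neg_eq_iff_add_eq_zero.1 h.symm)
      have h2 : (2:ℂ) * lam = 0 := by linear_combination this
      simpa using (mul_eq_zero.1 h2).resolve_left (by norm_num)
    rw [this] at hlre; simp at hlre
  refine ⟨hdet, hre, hneg, hlre, hlne, ?_⟩
  ext μ
  rw [spectrum.mem_iff, Matrix.isUnit_iff_isUnit_det, isUnit_iff_ne_zero, not_not]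
  have hcp : (algebraMap ℂ (Matrix (Fin 2) (Fin 2) ℂ) μ - Ainf).det
      = μ^2 - lam^2 := by
    rw [hlam2, hAinf]
    rw [Matrix.algebraMap_eq_diagonal]
    rw [show (Matrix.diagonal (algebraMap ℂ (Fin 2 → ℂ) μ) -
        !![(θ : ℂ) * (δi : ℂ) / z, 1 - (θ : ℂ)^2 / z;
           (δi : ℂ)^2 / z - z, -((θ : ℂ) * (δi : ℂ) / z)]) =
        !![μ - (θ : ℂ) * (δi : ℂ) / z, -(1 - (θ : ℂ)^2 / z);
           -((δi : ℂ)^2 / z - z), μ + (θ : ℂ) * (δi : ℂ) / z] from ?_,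
      Matrix.det_fin_two_of, ← hAinf, hdet]
    · field_simp
      ring
    · ext i j
      fin_cases i <;> fin_cases j <;>
        simp [Matrix.diagonal, Matrix.algebraMap_eq_diagonal]
  rw [hcp]
  constructor
  · intro h
    rcases (sq_eq_sq_iff_eq_or_eq_neg (a := μ) (b := lam)).1 (by linear_combination h) with h' | h'
    · exact Or.inl h'
    · exact Or.inr h'
  · rintro (rfl | rfl)
    · ring
    · ring
end

section
/- Let θ ∈ ℝ, ν ∈ ℝ, and let (U, V, W) be any solution of the regularized Fourier X-mode system. Then for all −L ≤ M < N < ∞: ν ∫_M^N (|U(x)|² + |V(x)|²) dx = Im(W(M) · conj(V(M))) − Im(W(N) · conj(V(N))). -/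
open Complex

lemma energy_key (θ ν a0 d0 : ℝ) (a b w : ℂ)
    (h : Complex.I * (θ:ℂ) * w - ((a0:ℂ) + Complex.I * (ν:ℂ)) * a
        - Complex.I * (d0:ℂ) * b = 0) :
    ((Complex.I * (d0:ℂ) * a - ((a0:ℂ) + Complex.I * (ν:ℂ)) * b) * (starRingEnd ℂ) b
      + w * (starRingEnd ℂ) (w + Complex.I * (θ:ℂ) * a)).im
      = -(ν * (‖a‖^2 + ‖b‖^2)) := by
  have h1 := congrArg Complex.re h
  have h2 := congrArg Complex.im h
  simp [Complex.ext_iff, Complex.mul_re, Complex.mul_im] at h1 h2 ⊢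
  rw [Complex.sq_norm, Complex.sq_norm, Complex.normSq_apply, Complex.normSq_apply]
  linear_combination a.im * h1 - a.re * h2

/-- The energy identity (equation (39) of the paper): for any solution of the
regularized Fourier X-mode system and any `-L ≤ M < N`,
`ν ∫_M^N (|U|² + |V|²) = Im(W(M) conj(V(M))) − Im(W(N) conj(V(N)))`. -/
theorem energy_identity
    (L θ ν : ℝ) (hL : 0 < L)
    (α δ : ℝ → ℝ)
    (hα : ContDiffOn ℝ 2 α (Set.Ici (-L)))
    (hαbd : ∃ C, ∀ x, -L ≤ x → |α x| ≤ C)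
    (hδ : ContDiffOn ℝ 1 δ (Set.Ici (-L)))
    (hδbd : ∃ C, ∀ x, -L ≤ x → |δ x| ≤ C)
    (U V W : ℝ → ℂ)
    (hVd : ∀ x, -L ≤ x → HasDerivAt V (W x + Complex.I * (θ : ℂ) * U x) x)
    (halg : ∀ x, -L ≤ x →
      Complex.I * (θ : ℂ) * W x - ((α x : ℂ) + Complex.I * (ν : ℂ)) * U x
        - Complex.I * (δ x : ℂ) * V x = 0)
    (hWd : ∀ x, -L ≤ x → HasDerivAt W
      (Complex.I * (δ x : ℂ) * U x - ((α x : ℂ) + Complex.I * (ν : ℂ)) * V x) x)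
    (M N : ℝ) (hM : -L ≤ M) (hMN : M < N) :
    ν * ∫ x in M..N, (‖U x‖^2 + ‖V x‖^2)
      = (W M * (starRingEnd ℂ) (V M)).im - (W N * (starRingEnd ℂ) (V N)).im := by
  set f : ℝ → ℝ := fun x => -(W x * (starRingEnd ℂ) (V x)).im with hf
  have hsub : Set.uIcc M N ⊆ Set.Ici (-L) := by
    rw [Set.uIcc_of_le hMN.le]
    exact fun x hx => le_trans hM hx.1
  -- the derivative of f
  have hderiv : ∀ x ∈ Set.uIcc M N,
      HasDerivAt f (ν * (‖U x‖^2 + ‖V x‖^2)) x := by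
    intro x hx
    have hxL : -L ≤ x := hsub hx
    have hV := hVd x hxL
    have hW := hWd x hxL
    have hcV : HasDerivAt (fun y => (starRingEnd ℂ) (V y))
        ((starRingEnd ℂ) (W x + Complex.I * (θ:ℂ) * U x)) x := hV.star
    have hprod := hW.mul hcV
    have him : HasDerivAt (fun y => (W y * (starRingEnd ℂ) (V y)).im)
        ((Complex.I * (δ x : ℂ) * U x - ((α x : ℂ) + Complex.I * (ν : ℂ)) * V x)
            * (starRingEnd ℂ) (V x)
          + W x * (starRingEnd ℂ) (W x + Complex.I * (θ:ℂ) * U x)).im x :=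
      (Complex.imCLM.hasFDerivAt.comp_hasDerivAt x hprod)
    have hval := energy_key θ ν (α x) (δ x) (U x) (V x) (W x) (halg x hxL)
    have := him.neg
    rw [hval, neg_neg] at this
    exact this
  -- integrability of the integrand
  have hint : IntervalIntegrable (fun x => ν * (‖U x‖^2 + ‖V x‖^2))
      MeasureTheory.volume M N := by
    rcases eq_or_ne ν 0 with hν | hν
    · simp [hν]
    · apply ContinuousOn.intervalIntegrable
      rw [Set.uIcc_of_le hMN.le]
      have hVc : ContinuousOn V (Set.Icc M N) := fun x hx =>
        ((hVd x (le_trans hM hx.1)).continuousAt).continuousWithinAt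
      have hWc : ContinuousOn W (Set.Icc M N) := fun x hx =>
        ((hWd x (le_trans hM hx.1)).continuousAt).continuousWithinAt
      have hαc : ContinuousOn α (Set.Icc M N) :=
        (hα.continuousOn).mono (fun x hx => le_trans hM hx.1)
      have hδc : ContinuousOn δ (Set.Icc M N) :=
        (hδ.continuousOn).mono (fun x hx => le_trans hM hx.1)
      have hden : ∀ x ∈ Set.Icc M N, ((α x : ℂ) + Complex.I * (ν : ℂ)) ≠ 0 := by
        intro x _
        intro hc
        have := congrArg Complex.im hc
        simp at this
        exact hν this
      have hUc : ContinuousOn U (Set.Icc M N) := by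
        have : ContinuousOn (fun x => (Complex.I * (θ:ℂ) * W x - Complex.I * (δ x : ℂ) * V x)
            / ((α x : ℂ) + Complex.I * (ν : ℂ))) (Set.Icc M N) := by
          apply ContinuousOn.div
          · exact (continuousOn_const.mul hWc).sub
              ((continuousOn_const.mul (Complex.continuous_ofReal.comp_continuousOn hδc)).mul hVc)
          · exact (Complex.continuous_ofReal.comp_continuousOn hαc).add continuousOn_const
          · exact hden
        apply this.congr
        intro x hx
        have h := halg x (le_trans hM hx.1)
        have hd := hden x hx
        field_simp
        linear_combination -h
      exact (continuousOn_const.mul ((hUc.norm.pow 2).add (hVc.norm.pow 2)))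
  have key := intervalIntegral.integral_eq_sub_of_hasDerivAt hderiv hint
  rw [intervalIntegral.integral_const_mul] at key
  rw [key]
  simp [hf]
  ring
end

section
/- Let θ ∈ ℝ, ν > 0, and let 𝐔₁^{θ,ν} = (U₁, V₁, W₁) be the first basis function. Then Im(W₁(0) · conj(V₁(0))) = 0, and for all N > 0: ν ∫_0^N (|U₁(x)|² + |V₁(x)|²) dx = −Im(W₁(N) · conj(V₁(N))). In particular Im(W₁(N) · conj(V₁(N))) < 0 for every N > 0, and W₁(N) · conj(V₁(N)) does not converge to 0 as N → ∞; hence the first basis function does not decay to zero at infinity. -/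
/-!
Along any solution of the system, the flux `F = Im (W conj V)` satisfies
`F' = -ν (|U|² + |V|²)`: the algebraic equation, multiplied by `conj U`, cancels every
non-real term. For the first basis function `F 0 = 0`, so `F` is antitone on `[0, ∞)` and
`-F N` is `ν` times the energy on `[0, N]`. That energy is positive: if `U₁ = V₁ = 0` on
`(0, N)` then `W₁ = V₁' - iθU₁` vanishes there too, and by continuity `W₁ 0 = iδ(0) = 0`.
An antitone function with `F 1 < 0` cannot tend to `0`.
-/

open Complex ComplexConjugate Set Filter Topology

section
variable {F g : ℝ → ℝ} {a b : ℝ}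

lemma antitoneOn_of_hasDerivAt_neg {D : Set ℝ} (hD : Convex ℝ D)
    (hF : ∀ x ∈ D, HasDerivAt F (-g x) x) (hg : ∀ x ∈ D, 0 ≤ g x) : AntitoneOn F D :=
  antitoneOn_of_hasDerivWithinAt_nonpos hD (fun x hx => (hF x hx).continuousAt.continuousWithinAt)
    (fun x hx => (hF x (interior_subset hx)).hasDerivWithinAt)
    (fun x hx => neg_nonpos.mpr (hg x (interior_subset hx)))

lemma integral_eq_sub_of_hasDerivAt_neg (hab : a ≤ b)
    (hF : ∀ x ∈ Icc a b, HasDerivAt F (-g x) x) (hg : ∀ x ∈ Icc a b, 0 ≤ g x) :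
    ∫ x in a..b, g x = F a - F b := by
  have hFb : ∀ x ∈ uIcc a b, HasDerivAt (-F) (g x) x := fun x hx => by
    simpa using (hF x (uIcc_of_le hab ▸ hx)).neg
  have hint : IntervalIntegrable g MeasureTheory.volume a b :=
    intervalIntegral.intervalIntegrable_deriv_of_nonneg (HasDerivAt.continuousOn hFb)
      (fun x hx => hFb x (Ioo_subset_Icc_self (by simpa [hab] using hx)))
      (fun x hx => hg x (Ioo_subset_Icc_self (by simpa [hab] using hx)))
  rw [intervalIntegral.integral_eq_sub_of_hasDerivAt hFb hint, Pi.neg_apply, Pi.neg_apply]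
  ring

lemma lt_of_hasDerivAt_neg (hF : ∀ x ∈ Icc a b, HasDerivAt F (-g x) x)
    (hg : ∀ x ∈ Icc a b, 0 ≤ g x) (hpos : ∃ x ∈ Ioo a b, 0 < g x) : F b < F a := by
  obtain ⟨c, hc, hgc⟩ := hpos
  have hanti := antitoneOn_of_hasDerivAt_neg (convex_Icc a b) hF hg
  have hab : a ≤ b := hc.1.le.trans hc.2.le
  refine (hanti ⟨le_rfl, hab⟩ ⟨hab, le_rfl⟩ hab).lt_of_ne fun hFab => hgc.ne' ?_
  have hconst : F =ᶠ[𝓝 c] fun _ => F a := by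
    filter_upwards [Ioo_mem_nhds hc.1 hc.2] with x hx
    exact le_antisymm (hanti ⟨le_rfl, hab⟩ (Ioo_subset_Icc_self hx) hx.1.le)
      (hFab ▸ hanti (Ioo_subset_Icc_self hx) ⟨hab, le_rfl⟩ hx.2.le)
  simpa using (hF c (Ioo_subset_Icc_self hc)).unique
    ((hasDerivAt_const c (F a)).congr_of_eventuallyEq hconst)

end

lemma exists_sq_norm_add_sq_norm_pos {U V W : ℝ → ℂ} {c : ℂ} {a b : ℝ} (hab : a < b)
    (hV : ∀ x ∈ Ioo a b, HasDerivAt V (W x + c * U x) x)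
    (hW : ContinuousAt W a) (hWa : W a ≠ 0) :
    ∃ x ∈ Ioo a b, 0 < ‖U x‖ ^ 2 + ‖V x‖ ^ 2 := by
  by_contra! hzero
  have hUV : ∀ x ∈ Ioo a b, U x = 0 ∧ V x = 0 := fun x hx => by
    simpa using (add_eq_zero_iff_of_nonneg (by positivity) (by positivity)).1
      (le_antisymm (hzero x hx) (by positivity))
  have hW0 : ∀ x ∈ Ioo a b, W x = 0 := fun x hx => by
    have hVx : V =ᶠ[𝓝 x] fun _ => 0 := by
      filter_upwards [Ioo_mem_nhds hx.1 hx.2] with y hy using (hUV y hy).2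
    simpa [(hUV x hx).1] using
      (hV x hx).unique ((hasDerivAt_const x 0).congr_of_eventuallyEq hVx)
  have hW0' : W =ᶠ[𝓝[>] a] fun _ => 0 := by
    filter_upwards [Ioo_mem_nhdsGT hab] with x hx using hW0 x hx
  exact hWa (tendsto_nhds_unique (hW.tendsto.mono_left nhdsWithin_le_nhds)
    (tendsto_const_nhds.congr' hW0'.symm))

lemma im_flux_deriv_eq_neg_energy {a d ν θ : ℝ} {u v w : ℂ}
    (h : I * θ * w - (a + I * ν) * u - I * d * v = 0) :
    ((I * d * u - (a + I * ν) * v) * conj v + w * conj (w + I * θ * u)).im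
      = -(ν * (‖u‖ ^ 2 + ‖v‖ ^ 2)) := by
  have hre := congrArg re h
  have him := congrArg im h
  simp only [sub_re, sub_im, add_re, add_im, mul_re, mul_im, neg_re, neg_im, conj_re, conj_im,
    I_re, I_im, ofReal_re, ofReal_im, zero_re, zero_im, map_add, map_mul, conj_I, conj_ofReal,
    Complex.sq_norm, normSq_apply] at hre him ⊢
  linear_combination (-u.re) * him + u.im * hre

lemma hasDerivAt_im_mul_conj {W V : ℝ → ℂ} {w v : ℂ} {x : ℝ}
    (hW : HasDerivAt W w x) (hV : HasDerivAt V v x) :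
    HasDerivAt (fun y => (W y * conj (V y)).im) ((w * conj (V x) + W x * conj v).im) x :=
  imCLM.hasFDerivAt.comp_hasDerivAt x (hW.mul hV.star)

lemma hasDerivAt_im_mul_conj_of_xMode {U V W : ℝ → ℂ} {a d ν θ x : ℝ}
    (hV : HasDerivAt V (W x + I * θ * U x) x)
    (halg : I * θ * W x - (a + I * ν) * U x - I * d * V x = 0)
    (hW : HasDerivAt W (I * d * U x - (a + I * ν) * V x) x) :
    HasDerivAt (fun y => (W y * conj (V y)).im) (-(ν * (‖U x‖ ^ 2 + ‖V x‖ ^ 2))) x :=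
  im_flux_deriv_eq_neg_energy halg ▸ hasDerivAt_im_mul_conj hW hV

theorem first_basis_function_does_not_decay_general
    (L θ ν : ℝ) (hL : 0 < L) (hν : 0 < ν)
    (α δ : ℝ → ℝ)
    (hδ0 : δ 0 ≠ 0)
    -- the first basis function 𝐔₁^{θ,ν}
    (U₁ V₁ W₁ : ℝ → ℂ)
    (hVd : ∀ x, -L ≤ x → HasDerivAt V₁ (W₁ x + Complex.I * (θ : ℂ) * U₁ x) x)
    (halg : ∀ x, -L ≤ x →
      Complex.I * (θ : ℂ) * W₁ x - ((α x : ℂ) + Complex.I * (ν : ℂ)) * U₁ x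
        - Complex.I * (δ x : ℂ) * V₁ x = 0)
    (hWd : ∀ x, -L ≤ x → HasDerivAt W₁
      (Complex.I * (δ x : ℂ) * U₁ x - ((α x : ℂ) + Complex.I * (ν : ℂ)) * V₁ x) x)
    (hV0 : V₁ 0 = Complex.I * (θ : ℂ)) (hW0 : W₁ 0 = Complex.I * (δ 0 : ℂ)) :
    (W₁ 0 * (starRingEnd ℂ) (V₁ 0)).im = 0
    ∧ (∀ N : ℝ, 0 < N →
        ν * ∫ x in (0:ℝ)..N, (‖U₁ x‖^2 + ‖V₁ x‖^2)
          = -(W₁ N * (starRingEnd ℂ) (V₁ N)).im)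
    ∧ (∀ N : ℝ, 0 < N → (W₁ N * (starRingEnd ℂ) (V₁ N)).im < 0)
    ∧ ¬ Filter.Tendsto (fun N => W₁ N * (starRingEnd ℂ) (V₁ N))
        Filter.atTop (nhds 0) := by
  set F : ℝ → ℝ := fun x => (W₁ x * conj (V₁ x)).im
  have hL' : ∀ x ∈ Ici (0 : ℝ), -L ≤ x := fun x hx => by linarith [mem_Ici.1 hx]
  have hF : ∀ x ∈ Ici (0 : ℝ), HasDerivAt F (-(ν * (‖U₁ x‖ ^ 2 + ‖V₁ x‖ ^ 2))) x :=
    fun x hx => hasDerivAt_im_mul_conj_of_xMode (hVd x (hL' x hx)) (halg x (hL' x hx))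
      (hWd x (hL' x hx))
  have hg : ∀ x ∈ Ici (0 : ℝ), 0 ≤ ν * (‖U₁ x‖ ^ 2 + ‖V₁ x‖ ^ 2) := fun x _ => by positivity
  have hF0 : F 0 = 0 := by simp [F, hV0, hW0]
  have energy : ∀ N : ℝ, 0 < N → ν * ∫ x in (0:ℝ)..N, (‖U₁ x‖ ^ 2 + ‖V₁ x‖ ^ 2) = -F N :=
    fun N hN => by
      rw [← intervalIntegral.integral_const_mul, integral_eq_sub_of_hasDerivAt_neg hN.le
        (fun x hx => hF x hx.1) (fun x hx => hg x hx.1), hF0, zero_sub]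
  have hneg : ∀ N : ℝ, 0 < N → F N < 0 := fun N hN => by
    obtain ⟨x, hx, hpos⟩ := exists_sq_norm_add_sq_norm_pos hN
      (fun x hx => hVd x (hL' x hx.1.le)) (hWd 0 (hL' 0 self_mem_Ici)).continuousAt
      (by simpa [hW0] using hδ0)
    exact hF0 ▸ lt_of_hasDerivAt_neg (fun x hx => hF x hx.1) (fun x hx => hg x hx.1)
      ⟨x, hx, mul_pos hν hpos⟩
  refine ⟨hF0, energy, hneg, fun hlim => ?_⟩
  have hanti := antitoneOn_of_hasDerivAt_neg (convex_Ici 0) hF hg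
  obtain ⟨N, hFN, hN⟩ := (((continuous_im.tendsto 0).comp hlim).eventually
    (lt_mem_nhds (hneg 1 one_pos)) |>.and (eventually_ge_atTop 1)).exists
  exact (hanti (mem_Ici.2 zero_le_one) (mem_Ici.2 (zero_le_one.trans hN)) hN).not_gt hFN

/-- The first basis function does not decay at infinity (Proposition 5.5 of the
paper): `Im(W₁(0) conj(V₁(0))) = 0`, the energy identity from `0` gives
`ν ∫_0^N (|U₁|² + |V₁|²) = −Im(W₁(N) conj(V₁(N)))`, which is strictly positive,
and `W₁(N) conj(V₁(N))` does not converge to `0` as `N → ∞`. -/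
theorem first_basis_function_does_not_decay
    (L θ ν : ℝ) (hL : 0 < L) (hν : 0 < ν)
    (α δ : ℝ → ℝ)
    (hα : ContDiffOn ℝ 2 α (Set.Ici (-L)))
    (hαbd : ∃ C, ∀ x, -L ≤ x → |α x| ≤ C)
    (hα0 : α 0 = 0)
    (hδ : ContDiffOn ℝ 1 δ (Set.Ici (-L)))
    (hδbd : ∃ C, ∀ x, -L ≤ x → |δ x| ≤ C)
    (hδ0 : δ 0 ≠ 0)
    -- the first basis function 𝐔₁^{θ,ν}
    (U₁ V₁ W₁ : ℝ → ℂ)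
    (hVd : ∀ x, -L ≤ x → HasDerivAt V₁ (W₁ x + Complex.I * (θ : ℂ) * U₁ x) x)
    (halg : ∀ x, -L ≤ x →
      Complex.I * (θ : ℂ) * W₁ x - ((α x : ℂ) + Complex.I * (ν : ℂ)) * U₁ x
        - Complex.I * (δ x : ℂ) * V₁ x = 0)
    (hWd : ∀ x, -L ≤ x → HasDerivAt W₁
      (Complex.I * (δ x : ℂ) * U₁ x - ((α x : ℂ) + Complex.I * (ν : ℂ)) * V₁ x) x)
    (hV0 : V₁ 0 = Complex.I * (θ : ℂ)) (hW0 : W₁ 0 = Complex.I * (δ 0 : ℂ)) :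
    (W₁ 0 * (starRingEnd ℂ) (V₁ 0)).im = 0
    ∧ (∀ N : ℝ, 0 < N →
        ν * ∫ x in (0:ℝ)..N, (‖U₁ x‖^2 + ‖V₁ x‖^2)
          = -(W₁ N * (starRingEnd ℂ) (V₁ N)).im)
    ∧ (∀ N : ℝ, 0 < N → (W₁ N * (starRingEnd ℂ) (V₁ N)).im < 0)
    ∧ ¬ Filter.Tendsto (fun N => W₁ N * (starRingEnd ℂ) (V₁ N))
        Filter.atTop (nhds 0) :=
  first_basis_function_does_not_decay_general L θ ν hL hν α δ hδ0 U₁ V₁ W₁ hVd halg hWd hV0 hW0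
end

section
/- Let θ ∈ ℝ and ν ≠ 0. Let (U₁, V₁, W₁) and (U₂, V₂, W₂) be two solutions of the regularized Fourier X-mode system, normalized respectively by V₁(0) = iθ, W₁(0) = iδ(0), and by iν U₂(0) = 1. Then the Wronskian relation V₁(x)W₂(x) − W₁(x)V₂(x) = 1 holds for every x ∈ [-L,∞). -/
open Complex

/-! Differentiating `V₁ W₂ - W₁ V₂` along two solutions leaves `iθ (U₁ W₂ - W₁ U₂) + iδ (V₁ U₂ - U₁ V₂)`,
and eliminating `iθ W` with the algebraic equation makes it vanish, so the Wronskian is constant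
on `[-L, ∞)`. At `0` the normalisations and `α 0 = 0` reduce it to `iν U₂(0) = 1`. -/

theorem Convex.eq_of_hasDerivWithinAt_zero {E : Type*} [NormedAddCommGroup E] [NormedSpace ℝ E]
    {s : Set ℝ} {f : ℝ → E} (hs : Convex ℝ s) (hf : ∀ x ∈ s, HasDerivWithinAt f 0 s x)
    {x y : ℝ} (hx : x ∈ s) (hy : y ∈ s) : f x = f y := by
  have h := hs.norm_image_sub_le_of_norm_hasDerivWithin_le hf (fun _ _ => norm_zero.le) hx hy
  rw [zero_mul, norm_le_zero_iff, sub_eq_zero] at h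
  exact h.symm

/-- The X-mode system has `a = iθ`, `b = iδ(x)`, `c = α(x) + iν`. -/
theorem hasDerivAt_wronskian_eq_zero {a b c : ℂ} {U₁ V₁ W₁ U₂ V₂ W₂ : ℝ → ℂ} {x : ℝ}
    (hV₁ : HasDerivAt V₁ (W₁ x + a * U₁ x) x) (hW₁ : HasDerivAt W₁ (b * U₁ x - c * V₁ x) x)
    (halg₁ : a * W₁ x - c * U₁ x - b * V₁ x = 0)
    (hV₂ : HasDerivAt V₂ (W₂ x + a * U₂ x) x) (hW₂ : HasDerivAt W₂ (b * U₂ x - c * V₂ x) x)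
    (halg₂ : a * W₂ x - c * U₂ x - b * V₂ x = 0) :
    HasDerivAt (fun y => V₁ y * W₂ y - W₁ y * V₂ y) 0 x :=
  ((hV₁.mul hW₂).sub (hW₁.mul hV₂)).congr_deriv
    (by linear_combination U₁ x * halg₂ - U₂ x * halg₁)

theorem wronskian_of_basis_functions_eq_one_general
    (L θ ν : ℝ) (hL : 0 < L)
    (α δ : ℝ → ℝ)
    (hα0 : α 0 = 0)
    -- the first basis function
    (U₁ V₁ W₁ : ℝ → ℂ)
    (hVd₁ : ∀ x, -L ≤ x → HasDerivAt V₁ (W₁ x + Complex.I * (θ : ℂ) * U₁ x) x)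
    (halg₁ : ∀ x, -L ≤ x →
      Complex.I * (θ : ℂ) * W₁ x - ((α x : ℂ) + Complex.I * (ν : ℂ)) * U₁ x
        - Complex.I * (δ x : ℂ) * V₁ x = 0)
    (hWd₁ : ∀ x, -L ≤ x → HasDerivAt W₁
      (Complex.I * (δ x : ℂ) * U₁ x - ((α x : ℂ) + Complex.I * (ν : ℂ)) * V₁ x) x)
    (hV₁0 : V₁ 0 = Complex.I * (θ : ℂ)) (hW₁0 : W₁ 0 = Complex.I * (δ 0 : ℂ))
    -- the second basis function
    (U₂ V₂ W₂ : ℝ → ℂ)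
    (hVd₂ : ∀ x, -L ≤ x → HasDerivAt V₂ (W₂ x + Complex.I * (θ : ℂ) * U₂ x) x)
    (halg₂ : ∀ x, -L ≤ x →
      Complex.I * (θ : ℂ) * W₂ x - ((α x : ℂ) + Complex.I * (ν : ℂ)) * U₂ x
        - Complex.I * (δ x : ℂ) * V₂ x = 0)
    (hWd₂ : ∀ x, -L ≤ x → HasDerivAt W₂
      (Complex.I * (δ x : ℂ) * U₂ x - ((α x : ℂ) + Complex.I * (ν : ℂ)) * V₂ x) x)
    (hU₂0 : Complex.I * (ν : ℂ) * U₂ 0 = 1) :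
    ∀ x, -L ≤ x → V₁ x * W₂ x - W₁ x * V₂ x = 1 := by
  intro x hx
  have h0 : -L ≤ 0 := neg_nonpos.2 hL.le
  have hconst : V₁ x * W₂ x - W₁ x * V₂ x = V₁ 0 * W₂ 0 - W₁ 0 * V₂ 0 :=
    (convex_Ici (-L)).eq_of_hasDerivWithinAt_zero
      (fun y hy => (hasDerivAt_wronskian_eq_zero (hVd₁ y hy) (hWd₁ y hy) (halg₁ y hy)
        (hVd₂ y hy) (hWd₂ y hy) (halg₂ y hy)).hasDerivWithinAt) hx h0
  have halg₂0 := halg₂ 0 h0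
  rw [hα0, Complex.ofReal_zero, zero_add] at halg₂0
  rw [hconst, hV₁0, hW₁0]
  linear_combination halg₂0 + hU₂0

/-- The Wronskian relation between the first and second basis functions
(Proposition 5.8 of the paper): with the normalizations `V₁(0) = iθ`,
`W₁(0) = iδ(0)` and `iν U₂(0) = 1`, one has
`V₁(x)W₂(x) − W₁(x)V₂(x) = 1` for all `x ∈ [-L,∞)`. -/
theorem wronskian_of_basis_functions_eq_one
    (L θ ν : ℝ) (hL : 0 < L) (hν : ν ≠ 0)
    (α δ : ℝ → ℝ)
    (hα : ContDiffOn ℝ 2 α (Set.Ici (-L)))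
    (hαbd : ∃ C, ∀ x, -L ≤ x → |α x| ≤ C)
    (hα0 : α 0 = 0)
    (hδ : ContDiffOn ℝ 1 δ (Set.Ici (-L)))
    (hδbd : ∃ C, ∀ x, -L ≤ x → |δ x| ≤ C)
    (hδ0 : δ 0 ≠ 0)
    -- the first basis function
    (U₁ V₁ W₁ : ℝ → ℂ)
    (hVd₁ : ∀ x, -L ≤ x → HasDerivAt V₁ (W₁ x + Complex.I * (θ : ℂ) * U₁ x) x)
    (halg₁ : ∀ x, -L ≤ x →
      Complex.I * (θ : ℂ) * W₁ x - ((α x : ℂ) + Complex.I * (ν : ℂ)) * U₁ x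
        - Complex.I * (δ x : ℂ) * V₁ x = 0)
    (hWd₁ : ∀ x, -L ≤ x → HasDerivAt W₁
      (Complex.I * (δ x : ℂ) * U₁ x - ((α x : ℂ) + Complex.I * (ν : ℂ)) * V₁ x) x)
    (hV₁0 : V₁ 0 = Complex.I * (θ : ℂ)) (hW₁0 : W₁ 0 = Complex.I * (δ 0 : ℂ))
    -- the second basis function
    (U₂ V₂ W₂ : ℝ → ℂ)
    (hVd₂ : ∀ x, -L ≤ x → HasDerivAt V₂ (W₂ x + Complex.I * (θ : ℂ) * U₂ x) x)
    (halg₂ : ∀ x, -L ≤ x →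
      Complex.I * (θ : ℂ) * W₂ x - ((α x : ℂ) + Complex.I * (ν : ℂ)) * U₂ x
        - Complex.I * (δ x : ℂ) * V₂ x = 0)
    (hWd₂ : ∀ x, -L ≤ x → HasDerivAt W₂
      (Complex.I * (δ x : ℂ) * U₂ x - ((α x : ℂ) + Complex.I * (ν : ℂ)) * V₂ x) x)
    (hU₂0 : Complex.I * (ν : ℂ) * U₂ 0 = 1) :
    ∀ x, -L ≤ x → V₁ x * W₂ x - W₁ x * V₂ x = 1 :=
  wronskian_of_basis_functions_eq_one_general L θ ν hL α δ hα0 U₁ V₁ W₁ hVd₁ halg₁ hWd₁ hV₁0 hW₁0 U₂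
    V₂ W₂ hVd₂ halg₂ hWd₂ hU₂0
end

section
/- Let H > 0, r > 0, let α : (0,H] → ℝ be continuous with α(x) < 0 and r x ≤ |α(x)| for all x ∈ (0,H], and let δ : (0,H] → ℝ be measurable and bounded with 4‖δ‖_∞² H < r. Then for every V ∈ H¹((0,H); ℂ) with V(0) = 0: ∫_0^H (|V'(x)|² + (δ(x)²/α(x))|V(x)|² − α(x)|V(x)|²) dx ≥ (1 − 4‖δ‖_∞² H / r) ∫_0^H |V'(x)|² dx ≥ 0. -/
/-!
Since `V x = ∫₀ˣ V'`, Cauchy–Schwarz gives the pointwise bound `‖V x‖² ≤ x ∫₀ᴴ ‖V'‖²`, which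
takes the place of the Hardy inequality. Combined with `δ² ≤ Cδ²` and `r x ≤ |α x|` it bounds the
potential term `|δ²/α · ‖V‖²|` by the constant `Cδ²/r ∫₀ᴴ ‖V'‖²`, whose integral over `(0, H]` is
at most `Cδ² H / r ∫₀ᴴ ‖V'‖²`, a quarter of what the smallness hypothesis allows; the term
`-α ‖V‖²` is nonnegative.
-/

open MeasureTheory Set

theorem sq_norm_setIntegral_le_measureReal_mul {α E : Type*} [MeasurableSpace α]
    [NormedAddCommGroup E] [NormedSpace ℝ E] [CompleteSpace E] {μ : Measure α} {s : Set α}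
    {f : α → E} (hs : μ s ≠ ⊤) (hf : IntegrableOn f s μ)
    (hf2 : IntegrableOn (fun x => ‖f x‖ ^ 2) s μ) :
    ‖∫ x in s, f x ∂μ‖ ^ 2 ≤ μ.real s * ∫ x in s, ‖f x‖ ^ 2 ∂μ := by
  rcases eq_or_ne (μ s) 0 with h0 | h0
  · simp [Measure.restrict_eq_zero.2 h0]
  have hm : 0 < μ.real s := ENNReal.toReal_pos h0 hs
  have jensen := (convexOn_univ_norm.pow (fun _ _ => norm_nonneg _) 2).map_set_average_le
    (by fun_prop : Continuous fun y : E => ‖y‖ ^ 2).continuousOn isClosed_univ h0 hs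
    (ae_of_all _ fun _ => mem_univ _) hf hf2
  simp only [Pi.pow_apply, setAverage_eq, norm_smul, mul_pow, smul_eq_mul, Real.norm_eq_abs,
    abs_inv, abs_of_pos hm] at jensen
  calc ‖∫ x in s, f x ∂μ‖ ^ 2 = μ.real s ^ 2 * ((μ.real s)⁻¹ ^ 2 * ‖∫ x in s, f x ∂μ‖ ^ 2) := by
        field_simp
    _ ≤ μ.real s ^ 2 * ((μ.real s)⁻¹ * ∫ x in s, ‖f x‖ ^ 2 ∂μ) := by gcongr
    _ = μ.real s * ∫ x in s, ‖f x‖ ^ 2 ∂μ := by field_simp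

section Primitive

variable {E : Type*} [NormedAddCommGroup E] [NormedSpace ℝ E] [CompleteSpace E]
  {f : ℝ → E} {a b : ℝ}

theorem sq_norm_intervalIntegral_le_mul (hab : a ≤ b) (hf : IntervalIntegrable f volume a b)
    (hf2 : IntervalIntegrable (fun x => ‖f x‖ ^ 2) volume a b) :
    ‖∫ x in a..b, f x‖ ^ 2 ≤ (b - a) * ∫ x in a..b, ‖f x‖ ^ 2 := by
  rw [intervalIntegral.integral_of_le hab, intervalIntegral.integral_of_le hab,
    ← Real.volume_real_Ioc_of_le hab]
  exact sq_norm_setIntegral_le_measureReal_mul measure_Ioc_lt_top.ne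
    ((intervalIntegrable_iff_integrableOn_Ioc_of_le hab).1 hf)
    ((intervalIntegrable_iff_integrableOn_Ioc_of_le hab).1 hf2)

theorem sq_norm_primitive_le {x : ℝ} (hx : x ∈ Icc a b) (hf : IntervalIntegrable f volume a b)
    (hf2 : IntervalIntegrable (fun x => ‖f x‖ ^ 2) volume a b) :
    ‖∫ t in a..x, f t‖ ^ 2 ≤ (x - a) * ∫ t in a..b, ‖f t‖ ^ 2 := by
  have hsub : uIcc a x ⊆ uIcc a b := uIcc_subset_uIcc_left (mem_uIcc_of_le hx.1 hx.2)
  calc ‖∫ t in a..x, f t‖ ^ 2 ≤ (x - a) * ∫ t in a..x, ‖f t‖ ^ 2 :=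
        sq_norm_intervalIntegral_le_mul hx.1 (hf.mono_set hsub) (hf2.mono_set hsub)
    _ ≤ (x - a) * ∫ t in a..b, ‖f t‖ ^ 2 := by
        gcongr
        · linarith [hx.1]
        · exact intervalIntegral.integral_mono_interval le_rfl hx.1 hx.2
            (ae_of_all _ fun _ => sq_nonneg _) hf2

end Primitive

theorem abs_sq_div_mul_le {a d v x r C I : ℝ} (hx : 0 < x) (hr : 0 < r)
    (har : r * x ≤ |a|) (hd : |d| ≤ C) (hv0 : 0 ≤ v) (hv : v ≤ x * I) :
    |d ^ 2 / a * v| ≤ C ^ 2 / r * I := by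
  have hd2 : d ^ 2 ≤ C ^ 2 := sq_le_sq' (abs_le.1 hd).1 (abs_le.1 hd).2
  calc |d ^ 2 / a * v| = d ^ 2 * v / |a| := by
        rw [abs_mul, abs_div, abs_of_nonneg (sq_nonneg d), abs_of_nonneg hv0, div_mul_eq_mul_div]
    _ ≤ C ^ 2 * (x * I) / (r * x) := by
        gcongr
        exact mul_nonneg (sq_nonneg C) (hv0.trans hv)
    _ = C ^ 2 / r * I := by field_simp

theorem intervalIntegrable_of_abs_le {g : ℝ → ℝ} {a b B : ℝ} (hab : a ≤ b)
    (hg : AEStronglyMeasurable g (volume.restrict (Ioc a b))) (hgB : ∀ x ∈ Ioc a b, |g x| ≤ B) :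
    IntervalIntegrable g volume a b :=
  (intervalIntegrable_iff_integrableOn_Ioc_of_le hab).2 <| IntegrableOn.of_bound
    measure_Ioc_lt_top hg B ((ae_restrict_iff' measurableSet_Ioc).2 (ae_of_all _ hgB))

theorem intervalIntegral.neg_mul_sub_le_integral_of_abs_le {g : ℝ → ℝ} {a b B : ℝ} (hab : a ≤ b)
    (hg : ∀ x ∈ Ioc a b, |g x| ≤ B) : -(B * (b - a)) ≤ ∫ x in a..b, g x := by
  have := intervalIntegral.norm_integral_le_of_norm_le_const (f := g) fun x hx =>
    hg x (uIoc_of_le hab ▸ hx)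
  rw [abs_of_nonneg (sub_nonneg.2 hab), Real.norm_eq_abs] at this
  exact neg_le_of_abs_le this

/-- The Hardy-type coercivity estimate under the smallness hypothesis (H5)
`4‖δ‖∞² H < r`: for `V ∈ H¹((0,H);ℂ)` with `V(0) = 0`,
`∫_0^H (|V'|² + (δ²/α)|V|² − α|V|²) ≥ (1 − 4‖δ‖∞²H/r) ∫_0^H |V'|² ≥ 0`. -/
theorem hardy_coercivity_estimate
    (H r Cδ : ℝ) (hH : 0 < H) (hr : 0 < r)
    (α δ : ℝ → ℝ)
    (hαc : ContinuousOn α (Set.Ioc 0 H))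
    (hαneg : ∀ x ∈ Set.Ioc (0:ℝ) H, α x < 0)
    (hαr : ∀ x ∈ Set.Ioc (0:ℝ) H, r * x ≤ |α x|)
    (hδm : Measurable δ)
    (hδbd : ∀ x ∈ Set.Ioc (0:ℝ) H, |δ x| ≤ Cδ)
    (h5 : 4 * Cδ^2 * H < r)
    -- V ∈ H¹((0,H);ℂ) with V(0) = 0, encoded via V = ∫ V' with V' ∈ L²(0,H)
    (V V' : ℝ → ℂ)
    (hV'int : IntervalIntegrable V' volume 0 H)
    (hV'sq : IntervalIntegrable (fun x => ‖V' x‖^2) volume 0 H)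
    (hV : ∀ x ∈ Set.Icc (0:ℝ) H, V x = ∫ t in (0:ℝ)..x, V' t)
    (hint : IntervalIntegrable (fun x => α x * ‖V x‖^2) volume 0 H) :
    (1 - 4 * Cδ^2 * H / r) * (∫ x in (0:ℝ)..H, ‖V' x‖^2)
      ≤ ∫ x in (0:ℝ)..H, (‖V' x‖^2 + (δ x^2 / α x) * ‖V x‖^2 - α x * ‖V x‖^2)
    ∧ 0 ≤ (1 - 4 * Cδ^2 * H / r) * (∫ x in (0:ℝ)..H, ‖V' x‖^2) := by
  set I := ∫ x in (0:ℝ)..H, ‖V' x‖ ^ 2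
  have hI : 0 ≤ I := intervalIntegral.integral_nonneg hH.le fun _ _ => sq_nonneg _
  have hVbd : ∀ x ∈ Ioc 0 H, ‖V x‖ ^ 2 ≤ x * I := fun x hx => by
    simpa [hV x (Ioc_subset_Icc_self hx)] using
      sq_norm_primitive_le (Ioc_subset_Icc_self hx) hV'int hV'sq
  have hpot : ∀ x ∈ Ioc 0 H, |δ x ^ 2 / α x * ‖V x‖ ^ 2| ≤ Cδ ^ 2 / r * I := fun x hx =>
    abs_sq_div_mul_le hx.1 hr (hαr x hx) (hδbd x hx) (sq_nonneg _) (hVbd x hx)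
  have hVc : ContinuousOn V (Icc 0 H) := by
    refine ContinuousOn.congr ?_ hV
    simpa [uIcc_of_le hH.le] using
      intervalIntegral.continuousOn_primitive_interval' hV'int left_mem_uIcc
  have hpot_int : IntervalIntegrable (fun x => δ x ^ 2 / α x * ‖V x‖ ^ 2) volume 0 H := by
    refine intervalIntegrable_of_abs_le hH.le ?_ hpot
    refine (((hδm.pow_const 2).aemeasurable.div (hαc.aemeasurable measurableSet_Ioc)).mul ?_)
      |>.aestronglyMeasurable
    exact ((hVc.mono Ioc_subset_Icc_self).norm.pow 2).aemeasurable measurableSet_Ioc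
  have hpot_ge : -(Cδ ^ 2 / r * I * H) ≤ ∫ x in (0:ℝ)..H, δ x ^ 2 / α x * ‖V x‖ ^ 2 := by
    simpa using intervalIntegral.neg_mul_sub_le_integral_of_abs_le hH.le hpot
  have hα_nonpos : ∫ x in (0:ℝ)..H, α x * ‖V x‖ ^ 2 ≤ 0 := by
    rw [intervalIntegral.integral_of_le hH.le]
    exact setIntegral_nonpos measurableSet_Ioc fun x hx =>
      mul_nonpos_of_nonpos_of_nonneg (hαneg x hx).le (sq_nonneg _)
  rw [intervalIntegral.integral_sub (hV'sq.add hpot_int) hint,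
    intervalIntegral.integral_add hV'sq hpot_int]
  have hcoef : 0 ≤ 1 - 4 * Cδ ^ 2 * H / r := by
    rw [sub_nonneg, div_le_one hr]; exact h5.le
  refine ⟨?_, mul_nonneg hcoef hI⟩
  have hB : 0 ≤ Cδ ^ 2 / r * I * H := by positivity
  have h4 : 4 * Cδ ^ 2 * H / r * I = 4 * (Cδ ^ 2 / r * I * H) := by ring
  rw [sub_mul, one_mul, h4]
  linarith
end

section
/- Assume α(x) < 0 for all x > 0, α(x) = α∞ and δ(x) = δ∞ for all x ≥ H with α∞ < 0 and α∞² − δ∞² > 0, and 4‖δ‖_∞² H < r. Let V : [0,∞) → ℂ be continuous, twice continuously differentiable on (0,∞), solving −V''(x) + (δ(x)²/α(x) − α(x)) V(x) = 0 for all x > 0, with V(0) = 0, with V' bounded near 0, and exponentially decaying at infinity (there are C, ε > 0 with |V(x)| + |V'(x)| ≤ C e^{−εx} for all x ≥ H). Then V ≡ 0 on [0,∞). In particular there is no such solution with lim_{x→0⁺} V'(x) = iδ(0) when δ(0) ≠ 0. -/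
/-!
Write `q = δ²/α - α`, so that `V'' = q V`. The flux `F = Re (conj V · V')` satisfies
`F' = |V'|² + q |V|²`, and `F` tends to `0` both at `0⁺` (since `V(0) = 0` and `V'` is bounded)
and at infinity (by the decay). For `x ≥ H` the potential `q = (δ∞² - α∞²)/α∞` is nonnegative,
while on `(0, H]` it is bounded below by `-‖δ‖²/(r x)`. By Cauchy–Schwarz,
`|V(x)|² ≲ x ∫ |V'|²`, so the negative part of `q` costs at most `2‖δ‖²H/r < 1` times
`∫ |V'|²`. Integrating `F'` therefore forces `∫₀^∞ |V'|² = 0`: `V` is constant, hence zero.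
-/

open Complex ComplexConjugate Filter Set MeasureTheory intervalIntegral Topology

theorem sq_intervalIntegral_le_mul_integral_sq {f : ℝ → ℝ} {a b : ℝ} (hab : a ≤ b)
    (hf : IntervalIntegrable f volume a b)
    (hf2 : IntervalIntegrable (fun t => f t ^ 2) volume a b) :
    (∫ t in a..b, f t) ^ 2 ≤ (b - a) * ∫ t in a..b, f t ^ 2 := by
  rcases hab.eq_or_lt with rfl | hab
  · simp
  -- expand `0 ≤ ∫ (f - m)²` at the mean value `m` of `f`
  set m := (∫ t in a..b, f t) / (b - a)
  have hexpand : ∫ t in a..b, (f t - m) ^ 2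
      = (∫ t in a..b, f t ^ 2) - 2 * m * (∫ t in a..b, f t) + (b - a) * m ^ 2 := by
    simp_rw [sub_sq]
    rw [integral_add (hf2.sub ((hf.const_mul 2).mul_const m)) intervalIntegrable_const,
      integral_sub hf2 ((hf.const_mul 2).mul_const m), intervalIntegral.integral_mul_const,
      intervalIntegral.integral_const_mul, intervalIntegral.integral_const, smul_eq_mul]
    ring
  have hnonneg : 0 ≤ ∫ t in a..b, (f t - m) ^ 2 :=
    integral_nonneg hab.le fun t _ => sq_nonneg _
  have hba : b - a ≠ 0 := (sub_pos.2 hab).ne'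
  rw [hexpand] at hnonneg
  have : (∫ t in a..b, f t) = m * (b - a) := (div_mul_cancel₀ _ hba).symm
  rw [this] at hnonneg ⊢
  nlinarith [sub_pos.2 hab]

variable {E : Type*} [NormedAddCommGroup E]

theorem tendsto_zero_of_norm_le_exp {f : ℝ → E} {C ε H : ℝ} (hε : 0 < ε)
    (hf : ∀ x, H ≤ x → ‖f x‖ ≤ C * Real.exp (-ε * x)) : Tendsto f atTop (𝓝 0) := by
  refine squeeze_zero_norm' ((eventually_ge_atTop H).mono hf) ?_
  simpa [neg_mul] using
    (Real.tendsto_exp_neg_atTop_nhds_zero.comp (tendsto_id.const_mul_atTop hε)).const_mul C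

variable [NormedSpace ℝ E]

theorem norm_le_mul_of_tendsto_zero_of_norm_deriv_le {f f' : ℝ → E} {ε C a : ℝ}
    (hf0 : Tendsto f (𝓝[>] 0) (𝓝 0)) (hf : ∀ t ∈ Ioo 0 ε, HasDerivAt f (f' t) t)
    (hbound : ∀ t ∈ Ioo 0 ε, ‖f' t‖ ≤ C) (ha : a ∈ Ioo 0 ε) : ‖f a‖ ≤ C * a := by
  have hlip : ∀ t ∈ Ioo 0 a, ‖f a - f t‖ ≤ C * (a - t) := fun t ht => by
    have hts : t ∈ Ioo 0 ε := ⟨ht.1, ht.2.trans ha.2⟩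
    simpa [Real.norm_eq_abs, abs_of_pos (sub_pos.2 ht.2)] using
      Convex.norm_image_sub_le_of_norm_hasDerivWithin_le
        (fun x hx => (hf x hx).hasDerivWithinAt) hbound (convex_Ioo 0 ε) hts ha
  have hlim : Tendsto (fun t => C * (a - t)) (𝓝[>] 0) (𝓝 (C * a)) := by
    refine tendsto_nhdsWithin_of_tendsto_nhds ?_
    exact (continuous_const.mul (continuous_const.sub continuous_id)).tendsto' 0 _ (by simp)
  simpa using le_of_tendsto_of_tendsto ((tendsto_const_nhds.sub hf0).norm) hlim
    (eventually_of_mem (Ioo_mem_nhdsGT ha.1) hlip)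

variable [CompleteSpace E]

theorem norm_sub_sq_le_mul_integral_norm_deriv_sq {f f' : ℝ → E} {a b : ℝ} (hab : a ≤ b)
    (hf : ∀ t ∈ Icc a b, HasDerivAt f (f' t) t) (hf' : ContinuousOn f' (Icc a b)) :
    ‖f b - f a‖ ^ 2 ≤ (b - a) * ∫ t in a..b, ‖f' t‖ ^ 2 := by
  have hcont : ContinuousOn f' (uIcc a b) := by rwa [uIcc_of_le hab]
  have hftc : ∫ t in a..b, f' t = f b - f a :=
    integral_eq_sub_of_hasDerivAt (by rwa [uIcc_of_le hab]) hcont.intervalIntegrable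
  calc ‖f b - f a‖ ^ 2 = ‖∫ t in a..b, f' t‖ ^ 2 := by rw [hftc]
    _ ≤ (∫ t in a..b, ‖f' t‖) ^ 2 := by
        gcongr
        exact intervalIntegral.norm_integral_le_integral_norm hab
    _ ≤ (b - a) * ∫ t in a..b, ‖f' t‖ ^ 2 :=
        sq_intervalIntegral_le_mul_integral_sq hab hcont.norm.intervalIntegrable
          (hcont.norm.pow 2).intervalIntegrable

theorem norm_sq_le_two_mul_norm_sq_add_integral {f f' : ℝ → E} {a x b : ℝ} (hax : a ≤ x)
    (hxb : x ≤ b) (hf : ∀ t ∈ Icc a b, HasDerivAt f (f' t) t) (hf' : ContinuousOn f' (Icc a b)) :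
    ‖f x‖ ^ 2 ≤ 2 * ‖f a‖ ^ 2 + 2 * (x - a) * ∫ t in a..b, ‖f' t‖ ^ 2 := by
  have hsub : Icc a x ⊆ Icc a b := Icc_subset_Icc_right hxb
  have hdiff := norm_sub_sq_le_mul_integral_norm_deriv_sq hax (fun t ht => hf t (hsub ht))
    (hf'.mono hsub)
  have hmono : ∫ t in a..x, ‖f' t‖ ^ 2 ≤ ∫ t in a..b, ‖f' t‖ ^ 2 :=
    integral_mono_interval le_rfl hax hxb (Eventually.of_forall fun t => sq_nonneg _)
      ((hf'.norm.pow 2).mono (uIcc_of_le (hax.trans hxb)).subset).intervalIntegrable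
  have htri : ‖f x‖ ≤ ‖f a‖ + ‖f x - f a‖ := norm_le_insert' _ _
  nlinarith [norm_nonneg (f x), norm_nonneg (f x - f a), sub_nonneg.2 hax,
    sq_nonneg (‖f a‖ - ‖f x - f a‖)]

def energyFlux (V V' : ℝ → ℂ) (x : ℝ) : ℝ := (conj (V x) * V' x).re

theorem hasDerivAt_energyFlux {V V' : ℝ → ℂ} {q x : ℝ} (hV : HasDerivAt V (V' x) x)
    (hV' : HasDerivAt V' (q * V x) x) :
    HasDerivAt (energyFlux V V') (‖V' x‖ ^ 2 + q * ‖V x‖ ^ 2) x := by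
  have h := reCLM.hasFDerivAt.comp_hasDerivAt x (hV.star.mul hV')
  refine h.congr_deriv ?_
  simp only [reCLM_apply, star_def, Complex.sq_norm, normSq_apply, add_re, mul_re, mul_im, conj_re,
    conj_im, ofReal_re, ofReal_im]
  ring

theorem tendsto_energyFlux_zero {V V' : ℝ → ℂ} {l : Filter ℝ} (hV : Tendsto V l (𝓝 0))
    (hV' : IsBoundedUnder (· ≤ ·) l fun x => ‖V' x‖) : Tendsto (energyFlux V V') l (𝓝 0) := by
  have hconj : Tendsto (fun x => conj (V x)) l (𝓝 0) :=
    (continuous_conj.tendsto' 0 0 (map_zero _)).comp hV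
  exact (continuous_re.tendsto 0).comp (hconj.zero_mul_isBoundedUnder_le hV')

theorem integral_energy_eq_energyFlux_sub {V V' : ℝ → ℂ} {q : ℝ → ℝ} {a b : ℝ} (hab : a ≤ b)
    (hV : ∀ x ∈ Icc a b, HasDerivAt V (V' x) x)
    (hV' : ∀ x ∈ Icc a b, HasDerivAt V' (q x * V x) x) (hq : ContinuousOn q (Icc a b)) :
    ∫ x in a..b, (‖V' x‖ ^ 2 + q x * ‖V x‖ ^ 2) = energyFlux V V' b - energyFlux V V' a := by
  have hVc : ContinuousOn V (Icc a b) := fun x hx => (hV x hx).continuousAt.continuousWithinAt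
  have hV'c : ContinuousOn V' (Icc a b) := fun x hx => (hV' x hx).continuousAt.continuousWithinAt
  rw [← uIcc_of_le hab] at hV hV' hVc hV'c hq
  exact integral_eq_sub_of_hasDerivAt (fun x hx => hasDerivAt_energyFlux (hV x hx) (hV' x hx))
    ((hV'c.norm.pow 2).add (hq.mul (hVc.norm.pow 2))).intervalIntegrable

section Potential

variable {V V' : ℝ → ℂ} {q : ℝ → ℝ} {κ H : ℝ}

theorem mul_norm_sq_ge_of_ge_neg_div {M a b x : ℝ}
    (hV : ∀ t ∈ Icc a b, HasDerivAt V (V' t) t) (hV' : ContinuousOn V' (Icc a b)) (hκ : 0 ≤ κ)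
    (hqx : -(κ / x) ≤ q x) (ha : 0 < a) (hx : x ∈ Icc a b) (hVa : ‖V a‖ ≤ M * a) :
    -(κ * (2 * M ^ 2 * a + 2 * ∫ t in a..b, ‖V' t‖ ^ 2)) ≤ q x * ‖V x‖ ^ 2 := by
  set I := ∫ t in a..b, ‖V' t‖ ^ 2
  have hx0 : 0 < x := ha.trans_le hx.1
  have hI : 0 ≤ I := integral_nonneg (hx.1.trans hx.2) fun _ _ => sq_nonneg _
  -- the Hardy-type bound `‖V x‖² ≤ 2 M² a² + 2 x I` absorbs the singularity of `κ / x`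
  have hVx : ‖V x‖ ^ 2 ≤ 2 * ‖V a‖ ^ 2 + 2 * (x - a) * I :=
    norm_sq_le_two_mul_norm_sq_add_integral hx.1 hx.2 hV hV'
  have hVa2 : ‖V a‖ ^ 2 ≤ (M * a) ^ 2 := pow_le_pow_left₀ (norm_nonneg _) hVa 2
  have hqV : -(κ / x) * ‖V x‖ ^ 2 ≤ q x * ‖V x‖ ^ 2 :=
    mul_le_mul_of_nonneg_right hqx (sq_nonneg _)
  have hκV : κ / x * ‖V x‖ ^ 2 ≤ κ * (2 * M ^ 2 * a + 2 * I) := by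
    rw [div_mul_eq_mul_div, div_le_iff₀ hx0]
    nlinarith [mul_le_mul_of_nonneg_left hVx hκ, mul_le_mul_of_nonneg_left hVa2 hκ,
      mul_nonneg (mul_nonneg hκ (sq_nonneg M)) (mul_nonneg ha.le (sub_nonneg.2 hx.1)),
      mul_nonneg (mul_nonneg hκ hI) ha.le]
  linarith

theorem integral_norm_deriv_sq_le_energyFlux_sub {M a b : ℝ}
    (hV : ∀ x, 0 < x → HasDerivAt V (V' x) x)
    (hV' : ∀ x, 0 < x → HasDerivAt V' (q x * V x) x) (hq : ContinuousOn q (Ioi 0))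
    (hκ : 0 ≤ κ) (hq_near : ∀ x ∈ Ioc 0 H, -(κ / x) ≤ q x) (hq_far : ∀ x, H ≤ x → 0 ≤ q x)
    (ha : 0 < a) (haH : a ≤ H) (hHb : H ≤ b) (hVa : ‖V a‖ ≤ M * a) :
    (1 - 2 * κ * H) * ∫ x in a..b, ‖V' x‖ ^ 2
      ≤ energyFlux V V' b - energyFlux V V' a + 2 * κ * H * M ^ 2 * a := by
  have hpos : Icc a b ⊆ Ioi 0 := fun x hx => ha.trans_le hx.1
  have hVab : ∀ x ∈ Icc a b, HasDerivAt V (V' x) x := fun x hx => hV x (hpos hx)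
  have hV'ab : ∀ x ∈ Icc a b, HasDerivAt V' (q x * V x) x := fun x hx => hV' x (hpos hx)
  have hVc : ContinuousOn V (Icc a b) := fun x hx => (hVab x hx).continuousAt.continuousWithinAt
  have hV'c : ContinuousOn V' (Icc a b) :=
    fun x hx => (hV'ab x hx).continuousAt.continuousWithinAt
  have hint : ∀ {g : ℝ → ℝ}, ContinuousOn g (Icc a b) → ∀ {u v}, u ∈ Icc a b → v ∈ Icc a b →
      IntervalIntegrable g volume u v :=
    fun hg _ _ hu hv => (hg.mono (ordConnected_Icc.uIcc_subset hu hv)).intervalIntegrable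
  have hD : ContinuousOn (fun x => ‖V' x‖ ^ 2) (Icc a b) := hV'c.norm.pow 2
  have hE : ContinuousOn (fun x => ‖V' x‖ ^ 2 + q x * ‖V x‖ ^ 2) (Icc a b) :=
    hD.add ((hq.mono hpos).mul (hVc.norm.pow 2))
  have hamem : a ∈ Icc a b := ⟨le_rfl, haH.trans hHb⟩
  have hHmem : H ∈ Icc a b := ⟨haH, hHb⟩
  have hbmem : b ∈ Icc a b := ⟨haH.trans hHb, le_rfl⟩
  set I := ∫ x in a..b, ‖V' x‖ ^ 2
  set K := κ * (2 * M ^ 2 * a + 2 * I)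
  have hI : 0 ≤ I := integral_nonneg (haH.trans hHb) fun _ _ => sq_nonneg _
  have hK : 0 ≤ K := mul_nonneg hκ (by nlinarith [sq_nonneg M])
  have hnear : ∀ x ∈ Icc a H, ‖V' x‖ ^ 2 - K ≤ ‖V' x‖ ^ 2 + q x * ‖V x‖ ^ 2 := fun x hx => by
    have := mul_norm_sq_ge_of_ge_neg_div hVab hV'c hκ (hq_near x ⟨ha.trans_le hx.1, hx.2⟩) ha
      ⟨hx.1, hx.2.trans hHb⟩ hVa
    linarith
  have hfar : ∀ x ∈ Icc H b, ‖V' x‖ ^ 2 ≤ ‖V' x‖ ^ 2 + q x * ‖V x‖ ^ 2 :=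
    fun x hx => le_add_of_nonneg_right (mul_nonneg (hq_far x hx.1) (sq_nonneg _))
  have hflux := integral_energy_eq_energyFlux_sub (haH.trans hHb) hVab hV'ab (hq.mono hpos)
  rw [← integral_add_adjacent_intervals (hint hE hamem hHmem) (hint hE hHmem hbmem)] at hflux
  have h1 := integral_mono_on haH ((hint hD hamem hHmem).sub intervalIntegrable_const)
    (hint hE hamem hHmem) hnear
  have h2 := integral_mono_on hHb (hint hD hHmem hbmem) (hint hE hHmem hbmem) hfar
  have hsplit : (∫ x in a..H, ‖V' x‖ ^ 2) + ∫ x in H..b, ‖V' x‖ ^ 2 = I :=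
    integral_add_adjacent_intervals (hint hD hamem hHmem) (hint hD hHmem hbmem)
  rw [integral_sub (hint hD hamem hHmem) intervalIntegrable_const,
    intervalIntegral.integral_const, smul_eq_mul] at h1
  have hHK : (H - a) * K ≤ H * K := mul_le_mul_of_nonneg_right (by linarith) hK
  nlinarith

theorem integral_norm_deriv_sq_nonpos {M ε x y : ℝ}
    (hV : ∀ x, 0 < x → HasDerivAt V (V' x) x)
    (hV' : ∀ x, 0 < x → HasDerivAt V' (q x * V x) x) (hq : ContinuousOn q (Ioi 0))
    (hH : 0 < H) (hκ : 0 ≤ κ) (hκH : 2 * κ * H < 1) (hq_near : ∀ x ∈ Ioc 0 H, -(κ / x) ≤ q x)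
    (hq_far : ∀ x, H ≤ x → 0 ≤ q x) (hV0 : Tendsto V (𝓝[>] 0) (𝓝 0)) (hε : 0 < ε)
    (hM : ∀ x ∈ Ioo 0 ε, ‖V' x‖ ≤ M) (hV_top : Tendsto V atTop (𝓝 0))
    (hV'_top : Tendsto V' atTop (𝓝 0)) (hx : 0 < x) (hxy : x ≤ y) :
    ∫ t in x..y, ‖V' t‖ ^ 2 ≤ 0 := by
  set F := energyFlux V V'
  have hF0 : Tendsto F (𝓝[>] 0) (𝓝 0) := tendsto_energyFlux_zero hV0
    (isBoundedUnder_of_eventually_le (eventually_of_mem (Ioo_mem_nhdsGT hε) hM))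
  have hF_top : Tendsto F atTop (𝓝 0) := tendsto_energyFlux_zero hV_top
    hV'_top.norm.isBoundedUnder_le
  have hV'c : ContinuousOn (fun t => ‖V' t‖ ^ 2) (Ioi 0) :=
    fun t ht => ((hV' t ht).continuousAt.norm.pow 2).continuousWithinAt
  have hbound : ∀ b, max y H ≤ b → (1 - 2 * κ * H) * ∫ t in x..y, ‖V' t‖ ^ 2 ≤ F b := by
    intro b hb
    have hlim : Tendsto (fun a => F b - F a + 2 * κ * H * M ^ 2 * a) (𝓝[>] 0) (𝓝 (F b)) := by
      simpa using (tendsto_const_nhds.sub hF0).add (tendsto_nhdsWithin_of_tendsto_nhds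
        ((continuous_const.mul continuous_id).tendsto' 0 0 (mul_zero _)))
    refine ge_of_tendsto hlim ?_
    filter_upwards [Ioo_mem_nhdsGT (lt_min (lt_min hε hH) hx)] with a ha
    have haε : a < ε := ha.2.trans_le ((min_le_left _ _).trans (min_le_left _ _))
    have haH : a ≤ H := (ha.2.trans_le ((min_le_left _ _).trans (min_le_right _ _))).le
    have hax : a ≤ x := (ha.2.trans_le (min_le_right _ _)).le
    have hHb : H ≤ b := (le_max_right _ _).trans hb
    calc (1 - 2 * κ * H) * ∫ t in x..y, ‖V' t‖ ^ 2
        ≤ (1 - 2 * κ * H) * ∫ t in a..b, ‖V' t‖ ^ 2 := by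
          refine mul_le_mul_of_nonneg_left ?_ (by linarith)
          exact integral_mono_interval hax hxy ((le_max_left _ _).trans hb)
            (Eventually.of_forall fun _ => sq_nonneg _) (hV'c.mono
              (ordConnected_Ioi.uIcc_subset ha.1 (hH.trans_le hHb))).intervalIntegrable
      _ ≤ F b - F a + 2 * κ * H * M ^ 2 * a :=
          integral_norm_deriv_sq_le_energyFlux_sub hV hV' hq hκ hq_near hq_far ha.1 haH hHb
            (norm_le_mul_of_tendsto_zero_of_norm_deriv_le hV0 (fun t ht => hV t ht.1) hM
              ⟨ha.1, haε⟩)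
  exact nonpos_of_mul_nonpos_right (ge_of_tendsto hF_top ((eventually_ge_atTop _).mono hbound))
    (by linarith)

theorem eq_zero_of_integral_norm_deriv_sq_nonpos {y : ℝ}
    (hV : ∀ x, 0 < x → HasDerivAt V (V' x) x) (hV'c : ContinuousOn V' (Ioi 0))
    (hV0 : Tendsto V (𝓝[>] 0) (𝓝 0))
    (hI : ∀ x, 0 < x → x ≤ y → ∫ t in x..y, ‖V' t‖ ^ 2 ≤ 0) (hy : 0 < y) : V y = 0 := by
  have hconst : ∀ x ∈ Ioo 0 y, V x = V y := by
    intro x hx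
    have hpos : Icc x y ⊆ Ioi 0 := fun t ht => hx.1.trans_le ht.1
    have h := norm_sub_sq_le_mul_integral_norm_deriv_sq hx.2.le (fun t ht => hV t (hpos ht))
      (hV'c.mono hpos)
    have : ‖V y - V x‖ ^ 2 ≤ 0 :=
      h.trans (mul_nonpos_of_nonneg_of_nonpos (sub_nonneg.2 hx.2.le) (hI x hx.1 hx.2.le))
    exact (sub_eq_zero.1 (norm_eq_zero.1 (pow_eq_zero_iff two_ne_zero |>.1
      (le_antisymm this (sq_nonneg _))))).symm
  exact tendsto_nhds_unique (tendsto_const_nhds.congr'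
    (eventually_of_mem (Ioo_mem_nhdsGT hy) fun x hx => (hconst x hx).symm)) hV0

theorem eq_zero_of_potential_ge_neg_div {M ε y : ℝ}
    (hV : ∀ x, 0 < x → HasDerivAt V (V' x) x)
    (hV' : ∀ x, 0 < x → HasDerivAt V' (q x * V x) x) (hq : ContinuousOn q (Ioi 0))
    (hH : 0 < H) (hκ : 0 ≤ κ) (hκH : 2 * κ * H < 1) (hq_near : ∀ x ∈ Ioc 0 H, -(κ / x) ≤ q x)
    (hq_far : ∀ x, H ≤ x → 0 ≤ q x) (hV0 : Tendsto V (𝓝[>] 0) (𝓝 0)) (hε : 0 < ε)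
    (hM : ∀ x ∈ Ioo 0 ε, ‖V' x‖ ≤ M) (hV_top : Tendsto V atTop (𝓝 0))
    (hV'_top : Tendsto V' atTop (𝓝 0)) (hy : 0 < y) : V y = 0 :=
  eq_zero_of_integral_norm_deriv_sq_nonpos hV
    (fun x hx => (hV' x hx).continuousAt.continuousWithinAt) hV0
    (fun _ hx hxy => integral_norm_deriv_sq_nonpos hV hV' hq hH hκ hκH hq_near hq_far hV0 hε hM
      hV_top hV'_top hx hxy) hy

end Potential

theorem not_tendsto_nhdsGT_of_hasDerivAt_of_eq_zero {V V' : ℝ → ℂ} {c : ℂ} (hc : c ≠ 0)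
    (hV : ∀ x, 0 < x → HasDerivAt V (V' x) x) (hV0 : ∀ x, 0 < x → V x = 0) :
    ¬ Tendsto V' (𝓝[>] 0) (𝓝 c) := fun hlim => hc <| by
  have hV' : ∀ x, 0 < x → V' x = 0 := fun x hx => (hV x hx).unique
    ((hasDerivAt_const x 0).congr_of_eventuallyEq (eventually_of_mem (Ioi_mem_nhds hx) hV0))
  exact tendsto_nhds_unique hlim (tendsto_const_nhds.congr'
    (eventually_of_mem self_mem_nhdsWithin fun x hx => (hV' x hx).symm))

theorem neg_div_div_le_sq_div_sub {a d r x C : ℝ} (hr : 0 < r) (hx : 0 < x) (ha : a < 0)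
    (hrx : r * |x| ≤ |a|) (hd : |d| ≤ C) : -(C ^ 2 / r / x) ≤ d ^ 2 / a - a := by
  rw [abs_of_pos hx, abs_of_neg ha] at hrx
  have hd2 : d ^ 2 ≤ C ^ 2 := sq_le_sq' (by linarith [neg_abs_le d]) ((le_abs_self d).trans hd)
  have h : d ^ 2 / -a ≤ C ^ 2 / (r * x) :=
    div_le_div₀ ((sq_nonneg d).trans hd2) hd2 (by positivity) hrx
  rw [div_neg, div_div] at *
  linarith

theorem sq_div_sub_self_nonneg {a d : ℝ} (ha : a < 0) (hd : d ^ 2 < a ^ 2) :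
    0 ≤ d ^ 2 / a - a := by
  rw [div_sub' ha.ne, ← sq]
  exact div_nonneg_of_nonpos (by linarith) ha.le

theorem budden_decaying_solution_vanishes_general
    (L H r Cδ αi δi : ℝ) (hL : 0 < L) (hH : 0 < H) (hr : 0 < r)
    (α δ : ℝ → ℝ)
    (hα : ContDiffOn ℝ 2 α (Set.Ici (-L)))
    (hαr : ∀ x ∈ Set.Icc (-L) H, r * |x| ≤ |α x|)
    (hαneg : ∀ x : ℝ, 0 < x → α x < 0)
    (hαinf : ∀ x, H ≤ x → α x = αi)
    (hδ : ContDiffOn ℝ 1 δ (Set.Ici (-L)))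
    (hδ0 : δ 0 ≠ 0)
    (hδinf : ∀ x, H ≤ x → δ x = δi)
    (hcoerc : δi^2 < αi^2)
    (hCδ : ∀ x, -L ≤ x → |δ x| ≤ Cδ)
    (h5 : 4 * Cδ^2 * H < r)
    -- the solution V of the Budden-type equation
    (V V' : ℝ → ℂ)
    (hVc : ContinuousOn V (Set.Ici (0:ℝ)))
    (hVd : ∀ x : ℝ, 0 < x → HasDerivAt V (V' x) x)
    (hV'd : ∀ x : ℝ, 0 < x →
      HasDerivAt V' (((δ x^2 / α x - α x : ℝ) : ℂ) * V x) x)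
    (hV0 : V 0 = 0)
    (hV'bd : ∃ M ε : ℝ, 0 < ε ∧ ∀ x ∈ Set.Ioo (0:ℝ) ε, ‖V' x‖ ≤ M)
    (hdecay : ∃ C₀ ε₀ : ℝ, 0 < C₀ ∧ 0 < ε₀ ∧
      ∀ x, H ≤ x → ‖V x‖ + ‖V' x‖ ≤ C₀ * Real.exp (-ε₀ * x)) :
    (∀ x : ℝ, 0 ≤ x → V x = 0)
    ∧ ¬ Filter.Tendsto V' (nhdsWithin 0 (Set.Ioi 0))
        (nhds (Complex.I * (δ 0 : ℂ))) := by
  obtain ⟨M, ε, hε, hM⟩ := hV'bd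
  obtain ⟨C₀, ε₀, -, hε₀, hdec⟩ := hdecay
  have hpos : Ioi (0 : ℝ) ⊆ Ici (-L) := Ioi_subset_Ici (by linarith)
  have hq : ContinuousOn (fun x => δ x ^ 2 / α x - α x) (Ioi 0) :=
    ((hδ.continuousOn.mono hpos).pow 2 |>.div (hα.continuousOn.mono hpos)
      fun x hx => (hαneg x hx).ne).sub (hα.continuousOn.mono hpos)
  have hq_near : ∀ x ∈ Ioc 0 H, -(Cδ ^ 2 / r / x) ≤ δ x ^ 2 / α x - α x := fun x hx =>
    neg_div_div_le_sq_div_sub hr hx.1 (hαneg x hx.1) (hαr x ⟨by linarith [hx.1], hx.2⟩)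
      (hCδ x (by linarith [hx.1]))
  have hq_far : ∀ x, H ≤ x → 0 ≤ δ x ^ 2 / α x - α x := fun x hx =>
    sq_div_sub_self_nonneg (hαneg x (hH.trans_le hx)) (by rwa [hαinf x hx, hδinf x hx])
  have hκH : 2 * (Cδ ^ 2 / r) * H < 1 := by
    rw [mul_div_assoc', div_mul_eq_mul_div, div_lt_one hr]
    nlinarith [sq_nonneg Cδ]
  have hV0' : Tendsto V (𝓝[>] 0) (𝓝 0) := hV0 ▸ (hVc 0 self_mem_Ici).mono Ioi_subset_Ici_self
  have hV_top := tendsto_zero_of_norm_le_exp hε₀ fun x hx =>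
    (le_add_of_nonneg_right (norm_nonneg (V' x))).trans (hdec x hx)
  have hV'_top := tendsto_zero_of_norm_le_exp hε₀ fun x hx =>
    (le_add_of_nonneg_left (norm_nonneg (V x))).trans (hdec x hx)
  have hVpos : ∀ y, 0 < y → V y = 0 := fun y hy =>
    eq_zero_of_potential_ge_neg_div hVd hV'd hq hH (by positivity) hκH hq_near hq_far hV0' hε hM
      hV_top hV'_top hy
  exact ⟨fun x hx => hx.eq_or_lt.elim (fun h => h ▸ hV0) (hVpos x),
    not_tendsto_nhdsGT_of_hasDerivAt_of_eq_zero (mul_ne_zero I_ne_zero (ofReal_ne_zero.2 hδ0))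
      hVd hVpos⟩

/-- Under the smallness hypothesis (H5), every exponentially decaying solution
of the Budden-type equation `−V'' + (δ²/α − α)V = 0` on `(0,∞)` with `V(0) = 0`
and `V'` bounded near `0` vanishes identically; in particular there is no such
solution with `lim_{x→0⁺} V'(x) = iδ(0)` (Proposition 5.13 of the paper: the
`θ = 0` regular solution increases exponentially at infinity). -/
theorem budden_decaying_solution_vanishes
    (L H r Cδ αi δi : ℝ) (hL : 0 < L) (hH : 0 < H) (hr : 0 < r)
    (α δ : ℝ → ℝ)
    (hα : ContDiffOn ℝ 2 α (Set.Ici (-L)))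
    (hαbd : ∃ C, ∀ x, -L ≤ x → |α x| ≤ C)
    (hα0 : α 0 = 0) (hα'0 : deriv α 0 < 0)
    (hαr : ∀ x ∈ Set.Icc (-L) H, r * |x| ≤ |α x|)
    (hαneg : ∀ x : ℝ, 0 < x → α x < 0)
    (hαinf : ∀ x, H ≤ x → α x = αi) (hαi : αi < 0)
    (hδ : ContDiffOn ℝ 1 δ (Set.Ici (-L)))
    (hδ0 : δ 0 ≠ 0)
    (hδinf : ∀ x, H ≤ x → δ x = δi)
    (hcoerc : δi^2 < αi^2)
    (hCδ : ∀ x, -L ≤ x → |δ x| ≤ Cδ)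
    (h5 : 4 * Cδ^2 * H < r)
    -- the solution V of the Budden-type equation
    (V V' : ℝ → ℂ)
    (hVc : ContinuousOn V (Set.Ici (0:ℝ)))
    (hVd : ∀ x : ℝ, 0 < x → HasDerivAt V (V' x) x)
    (hV'd : ∀ x : ℝ, 0 < x →
      HasDerivAt V' (((δ x^2 / α x - α x : ℝ) : ℂ) * V x) x)
    (hV0 : V 0 = 0)
    (hV'bd : ∃ M ε : ℝ, 0 < ε ∧ ∀ x ∈ Set.Ioo (0:ℝ) ε, ‖V' x‖ ≤ M)
    (hdecay : ∃ C₀ ε₀ : ℝ, 0 < C₀ ∧ 0 < ε₀ ∧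
      ∀ x, H ≤ x → ‖V x‖ + ‖V' x‖ ≤ C₀ * Real.exp (-ε₀ * x)) :
    (∀ x : ℝ, 0 ≤ x → V x = 0)
    ∧ ¬ Filter.Tendsto V' (nhdsWithin 0 (Set.Ioi 0))
        (nhds (Complex.I * (δ 0 : ℂ))) :=
  budden_decaying_solution_vanishes_general L H r Cδ αi δi hL hH hr α δ hα hαr hαneg hαinf hδ hδ0
    hδinf hcoerc hCδ h5 V V' hVc hVd hV'd hV0 hV'bd hdecay
end

section
/- Let θ ∈ ℝ. There exists a constant C > 0 (depending on θ, α, δ, L, H but not on ν) such that for every ν ∈ (0,1] and every solution (U, V, W) of the regularized Fourier X-mode system: |U(x)| ≤ C (|V(H)| + |W(H)|) / √(r²x² + ν²) for all 0 < x ≤ H. -/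
/-!
Eliminating `U` through the algebraic equation gives `(α + iν) U = i P` with `P = θ W - δ V`,
and `P' = -(θ (α + iν) + δ') V - δ W` contains no `U`. Since `|α + iν| ≥ r x`, the vector
`F = (V, W, ρ P)` satisfies an Euler-type inequality `x ‖F'‖ ≤ (κ x + 1/4) ‖F‖` on `(0, H]`: the
singular `1/x`-terms coming from `U` are made small by a large weight `ρ`, and no constant depends
on `ν ∈ (0, 1]`. Backward Grönwall in the variable `log x` bounds `‖F‖` on `[η, H]` by `‖F(H)‖`,
and below `η = H / (1 + 4κH)` gives `‖F(x)‖ ≤ (η / x)^{1/2} ‖F(η)‖`. This is integrable at `0`, so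
integrating `P'` keeps `P` bounded, and `|U| = |P| / |α + iν| ≤ |P| / √(r²x² + ν²)`.
-/

open Complex Set

variable {E F : Type*} [NormedAddCommGroup E] [NormedSpace ℝ E] [NormedAddCommGroup F]
  [NormedSpace ℝ F]

theorem norm_le_norm_mul_rpow_of_mul_norm_deriv_le {f f' : ℝ → E} {K x η : ℝ}
    (hx : 0 < x) (hxη : x ≤ η) (hf : ∀ t ∈ Icc x η, HasDerivAt f (f' t) t)
    (hbound : ∀ t ∈ Icc x η, t * ‖f' t‖ ≤ K * ‖f t‖) :
    ‖f x‖ ≤ ‖f η‖ * (η / x) ^ K := by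
  -- the substitution `t = η e^{-s}` turns `t d/dt` into `-d/ds`
  have hη : 0 < η := hx.trans_le hxη
  set S := Real.log (η / x)
  set φ : ℝ → ℝ := fun s => η * Real.exp (-s)
  have hφS : φ S = x := by
    simp only [φ, S, Real.exp_neg, Real.exp_log (div_pos hη hx)]
    field_simp
  have hφ_mem : ∀ s ∈ Icc 0 S, φ s ∈ Icc x η := by
    intro s hs
    constructor
    · rw [← hφS]
      exact mul_le_mul_of_nonneg_left (Real.exp_le_exp.2 (neg_le_neg hs.2)) hη.le
    · simpa [φ] using mul_le_of_le_one_right hη.le (Real.exp_le_one_iff.2 (neg_nonpos.2 hs.1))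
  have hφ_deriv : ∀ s, HasDerivAt φ (-φ s) s := fun s => by
    simpa [φ] using ((Real.hasDerivAt_exp (-s)).comp s (hasDerivAt_neg s)).const_mul η
  have hcomp : ∀ s ∈ Icc 0 S, HasDerivAt (f ∘ φ) ((-φ s) • f' (φ s)) s := fun s hs =>
    (hf _ (hφ_mem s hs)).scomp s (hφ_deriv s)
  have key := norm_le_gronwallBound_of_norm_deriv_right_le (δ := ‖f η‖) (ε := 0) (K := K)
    (fun s hs => (hcomp s hs).continuousAt.continuousWithinAt)
    (fun s hs => (hcomp s (Ico_subset_Icc_self hs)).hasDerivWithinAt)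
    (by simp [φ]) (fun s hs => by
      have hpos : 0 < φ s := by positivity
      rw [norm_smul, Real.norm_eq_abs, abs_neg, abs_of_pos hpos, add_zero]
      exact hbound _ (hφ_mem s (Ico_subset_Icc_self hs)))
    S ⟨Real.log_nonneg ((one_le_div hx).2 hxη), le_rfl⟩
  rw [Function.comp_apply, hφS, sub_zero, gronwallBound_ε0] at key
  rwa [Real.rpow_def_of_pos (div_pos hη hx), mul_comm (Real.log _)]

theorem norm_sub_le_of_norm_deriv_le_div_sqrt {f f' : ℝ → E} {A x η : ℝ}
    (hx : 0 < x) (hxη : x ≤ η) (hf : ∀ t ∈ Icc x η, HasDerivAt f (f' t) t)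
    (hbound : ∀ t ∈ Icc x η, ‖f' t‖ ≤ A / √t) :
    ‖f η - f x‖ ≤ 2 * A * (√η - √x) := by
  have hB : ∀ t ∈ Ico x η,
      HasDerivWithinAt (fun t => 2 * A * (√t - √x)) (A / √t) (Ici t) t := fun t ht => by
    have ht : 0 < t := hx.trans_le ht.1
    have hsqrt : √t ≠ 0 := (Real.sqrt_pos.2 ht).ne'
    refine ((((Real.hasDerivAt_sqrt ht.ne').sub_const √x).const_mul (2 * A)).congr_deriv
      ?_).hasDerivWithinAt
    field_simp
  exact image_norm_le_of_norm_deriv_right_le_deriv_boundary' (f := fun t => f t - f x)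
    (fun t ht => ((hf t ht).sub_const (f x)).continuousAt.continuousWithinAt)
    (fun t ht => ((hf t (Ico_subset_Icc_self ht)).sub_const (f x)).hasDerivWithinAt)
    (by simp)
    (fun t _ => ((Real.continuous_sqrt.sub continuous_const).const_mul _).continuousWithinAt)
    hB (fun t ht => hbound t (Ico_subset_Icc_self ht)) ⟨hxη, le_rfl⟩

theorem ContDiffOn.exists_abs_deriv_le {f : ℝ → ℝ} {a b c : ℝ} (hf : ContDiffOn ℝ 1 f (Ici a))
    (hab : a < b) : ∃ C, ∀ t ∈ Icc b c, |deriv f t| ≤ C := by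
  have hcont : ContinuousOn (deriv f) (Icc b c) :=
    ((hf.mono Ioi_subset_Ici_self).continuousOn_deriv_of_isOpen isOpen_Ioi le_rfl).mono
      fun t ht => hab.trans_le ht.1
  simpa only [Real.norm_eq_abs] using isCompact_Icc.exists_bound_of_continuousOn hcont

theorem sqrt_sq_add_sq_le_norm_ofReal_add_I_mul {a b ν : ℝ} (h : |b| ≤ |a|) :
    √(b ^ 2 + ν ^ 2) ≤ ‖(a : ℂ) + I * ν‖ := by
  rw [mul_comm I, norm_add_mul_I]
  exact Real.sqrt_le_sqrt (add_le_add_left (sq_le_sq.2 h) _)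

section EulerType

variable {f f' : ℝ → E} {g g' : ℝ → F} {κ c ρ H η : ℝ}

theorem norm_le_of_mul_norm_deriv_le_of_mem_Icc (hf : ∀ t ∈ Ioc 0 H, HasDerivAt f (f' t) t)
    (hfbound : ∀ t ∈ Ioc 0 H, t * ‖f' t‖ ≤ (κ * t + 1 / 4) * ‖f t‖) (hκ : 0 ≤ κ) (hη : 0 < η)
    {y : ℝ} (hy : y ∈ Icc η H) :
    ‖f y‖ ≤ (H / η) ^ (κ * H + 1 / 4) * ‖f H‖ := by
  have hy0 : 0 < y := hη.trans_le hy.1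
  have hmem : ∀ t ∈ Icc y H, t ∈ Ioc 0 H := fun t ht => ⟨hy0.trans_le ht.1, ht.2⟩
  calc ‖f y‖ ≤ ‖f H‖ * (H / y) ^ (κ * H + 1 / 4) :=
        norm_le_norm_mul_rpow_of_mul_norm_deriv_le hy0 hy.2 (fun t ht => hf t (hmem t ht))
          fun t ht => (hfbound t (hmem t ht)).trans (by gcongr; exact (hmem t ht).2)
    _ ≤ (H / η) ^ (κ * H + 1 / 4) * ‖f H‖ := by
        have hH : 0 < H := hy0.trans_le hy.2
        rw [mul_comm]
        gcongr
        exact hy.1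

theorem norm_le_of_mul_norm_deriv_le_of_le (hf : ∀ t ∈ Ioc 0 H, HasDerivAt f (f' t) t)
    (hfbound : ∀ t ∈ Ioc 0 H, t * ‖f' t‖ ≤ (κ * t + 1 / 4) * ‖f t‖)
    (hg : ∀ t ∈ Ioc 0 H, HasDerivAt g (g' t) t) (hgbound : ∀ t ∈ Ioc 0 H, ‖g' t‖ ≤ c * ‖f t‖)
    (hgf : ∀ t ∈ Ioc 0 H, ρ * ‖g t‖ ≤ ‖f t‖) (hκ : 0 ≤ κ) (hc : 0 ≤ c) (hρ : 0 < ρ)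
    (hηH : η ≤ H) (hκη : κ * η ≤ 1 / 4) {x : ℝ} (hx : 0 < x) (hxη : x ≤ η) :
    ‖g x‖ ≤ (1 / ρ + 2 * c * η) * ‖f η‖ := by
  have hη : 0 < η := hx.trans_le hxη
  have hmem : ∀ t ∈ Icc x η, t ∈ Ioc 0 H := fun t ht => ⟨hx.trans_le ht.1, ht.2.trans hηH⟩
  have hdecay : ∀ t ∈ Icc x η, ‖f t‖ ≤ ‖f η‖ * (η / t) ^ (1 / 2 : ℝ) := fun t ht =>
    have ht0 : 0 < t := hx.trans_le ht.1
    norm_le_norm_mul_rpow_of_mul_norm_deriv_le ht0 ht.2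
      (fun s hs => hf s (hmem s ⟨ht.1.trans hs.1, hs.2⟩)) fun s hs => by
        refine (hfbound s (hmem s ⟨ht.1.trans hs.1, hs.2⟩)).trans ?_
        have : κ * s ≤ κ * η := mul_le_mul_of_nonneg_left hs.2 hκ
        gcongr
        linarith
  have hg'_le : ∀ t ∈ Icc x η, ‖g' t‖ ≤ c * ‖f η‖ * √η / √t := fun t ht => by
    rw [mul_div_assoc, ← Real.sqrt_div' _ (hx.trans_le ht.1).le, Real.sqrt_eq_rpow]
    exact (hgbound t (hmem t ht)).trans (by rw [mul_assoc]; gcongr; exact hdecay t ht)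
  have hdiff := norm_sub_le_of_norm_deriv_le_div_sqrt hx hxη
    (fun t ht => hg t (hmem t ht)) hg'_le
  have hgη : ‖g η‖ ≤ ‖f η‖ / ρ := by
    rw [le_div_iff₀ hρ, mul_comm]
    exact hgf η (hmem η ⟨hxη, le_rfl⟩)
  have hsqrt : √η * (√η - √x) ≤ η := by
    nlinarith [Real.mul_self_sqrt hη.le, Real.sqrt_nonneg x, Real.sqrt_nonneg η]
  calc ‖g x‖ ≤ ‖g η‖ + ‖g η - g x‖ := by
        simpa using norm_sub_le (g η) (g η - g x)
    _ ≤ ‖f η‖ / ρ + 2 * (c * ‖f η‖ * √η) * (√η - √x) := add_le_add hgη hdiff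
    _ = ‖f η‖ / ρ + 2 * c * ‖f η‖ * (√η * (√η - √x)) := by ring
    _ ≤ ‖f η‖ / ρ + 2 * c * ‖f η‖ * η := by gcongr
    _ = (1 / ρ + 2 * c * η) * ‖f η‖ := by ring

theorem exists_norm_le_mul_norm_of_mul_norm_deriv_le (hκ : 0 ≤ κ) (hc : 0 ≤ c) (hρ : 0 < ρ)
    (hH : 0 < H) :
    ∃ C > 0, ∀ (f f' : ℝ → E) (g g' : ℝ → F),
      (∀ t ∈ Ioc 0 H, HasDerivAt f (f' t) t) →
      (∀ t ∈ Ioc 0 H, t * ‖f' t‖ ≤ (κ * t + 1 / 4) * ‖f t‖) →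
      (∀ t ∈ Ioc 0 H, HasDerivAt g (g' t) t) → (∀ t ∈ Ioc 0 H, ‖g' t‖ ≤ c * ‖f t‖) →
      (∀ t ∈ Ioc 0 H, ρ * ‖g t‖ ≤ ‖f t‖) → ∀ x ∈ Ioc 0 H, ‖g x‖ ≤ C * ‖f H‖ := by
  set η := H / (1 + 4 * κ * H)
  have hη : 0 < η := by positivity
  have hηH : η ≤ H := div_le_self hH.le (by nlinarith)
  have hκη : κ * η ≤ 1 / 4 := by
    rw [mul_div_assoc', div_le_iff₀ (by positivity)]
    linarith
  set M := (H / η) ^ (κ * H + 1 / 4)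
  have hM : 0 < M := by positivity
  refine ⟨(1 / ρ + 2 * c * η) * M, by positivity, ?_⟩
  intro f f' g g' hf hfbound hg hgbound hgf x hx
  rcases le_total x η with hxη | hηx
  · calc ‖g x‖ ≤ (1 / ρ + 2 * c * η) * ‖f η‖ :=
          norm_le_of_mul_norm_deriv_le_of_le hf hfbound hg hgbound hgf hκ hc hρ hηH hκη hx.1 hxη
      _ ≤ (1 / ρ + 2 * c * η) * (M * ‖f H‖) := by
          gcongr
          exact norm_le_of_mul_norm_deriv_le_of_mem_Icc hf hfbound hκ hη ⟨le_rfl, hηH⟩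
      _ = _ := by ring
  · have hfx := norm_le_of_mul_norm_deriv_le_of_mem_Icc hf hfbound hκ hη ⟨hηx, hx.2⟩
    calc ‖g x‖ ≤ ‖f x‖ / ρ := by rw [le_div_iff₀ hρ, mul_comm]; exact hgf x hx
      _ ≤ M * ‖f H‖ / ρ := by gcongr
      _ ≤ (1 / ρ + 2 * c * η) * M * ‖f H‖ := by
          rw [div_eq_mul_one_div, mul_comm, ← mul_assoc]
          gcongr
          exact le_add_of_nonneg_right (by positivity)

end EulerType

structure IsXModeSolutionOn (θ ν : ℝ) (α δ : ℝ → ℝ) (U V W : ℝ → ℂ) (s : Set ℝ) : Prop where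
  hasDerivAt_V : ∀ x ∈ s, HasDerivAt V (W x + I * θ * U x) x
  relation : ∀ x ∈ s, I * θ * W x - (α x + I * ν) * U x - I * δ x * V x = 0
  hasDerivAt_W : ∀ x ∈ s, HasDerivAt W (I * δ x * U x - (α x + I * ν) * V x) x

/-- By the algebraic equation, `(α + iν) U = i P`; the `U`-terms cancel in `P'`. -/
def xModeP (θ : ℝ) (δ : ℝ → ℝ) (V W : ℝ → ℂ) (x : ℝ) : ℂ :=
  θ * W x - δ x * V x

noncomputable def xModeVec (ρ θ : ℝ) (δ : ℝ → ℝ) (V W : ℝ → ℂ) (x : ℝ) : ℂ × ℂ × ℂ :=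
  (V x, W x, ρ • xModeP θ δ V W x)

section XMode

variable {θ ν ρ : ℝ} {α δ : ℝ → ℝ} {U V W : ℝ → ℂ} {s : Set ℝ} {x : ℝ}

theorem norm_V_le_norm_xModeVec : ‖V x‖ ≤ ‖xModeVec ρ θ δ V W x‖ :=
  norm_fst_le (V x, W x, _)

theorem norm_W_le_norm_xModeVec : ‖W x‖ ≤ ‖xModeVec ρ θ δ V W x‖ :=
  (norm_fst_le (W x, _)).trans (norm_snd_le (V x, W x, _))

theorem mul_norm_xModeP_le_norm_xModeVec (hρ : 0 ≤ ρ) :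
    ρ * ‖xModeP θ δ V W x‖ ≤ ‖xModeVec ρ θ δ V W x‖ := by
  refine le_of_eq_of_le ?_ ((norm_snd_le (W x, ρ • xModeP θ δ V W x)).trans
    (norm_snd_le (V x, W x, _)))
  rw [norm_smul, Real.norm_of_nonneg hρ]

theorem norm_xModeP_le {D : ℝ} (hδ : |δ x| ≤ D) :
    ‖xModeP θ δ V W x‖ ≤ |θ| * ‖W x‖ + D * ‖V x‖ := by
  refine (norm_sub_le _ _).trans ?_
  rw [norm_mul, norm_mul, norm_real, norm_real, Real.norm_eq_abs, Real.norm_eq_abs]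
  gcongr

theorem norm_xModeVec_le {D : ℝ} (hρ : 1 ≤ ρ) (hδ : |δ x| ≤ D) :
    ‖xModeVec ρ θ δ V W x‖ ≤ ρ * (1 + |θ| + D) * (‖V x‖ + ‖W x‖) := by
  have hD : 0 ≤ D := (abs_nonneg _).trans hδ
  have hV := norm_nonneg (V x)
  have hW := norm_nonneg (W x)
  have hk : 1 ≤ ρ * (1 + |θ| + D) :=
    one_le_mul_of_one_le_of_one_le hρ (by linarith [abs_nonneg θ])
  simp only [xModeVec, Prod.norm_mk, norm_smul, Real.norm_of_nonneg (zero_le_one.trans hρ)]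
  refine max_le ?_ (max_le ?_ ?_)
  · nlinarith
  · nlinarith
  · calc ρ * ‖xModeP θ δ V W x‖ ≤ ρ * (|θ| * ‖W x‖ + D * ‖V x‖) := by
          gcongr
          exact norm_xModeP_le hδ
      _ ≤ _ := by
          nlinarith [mul_nonneg (zero_le_one.trans hρ)
            (by positivity : 0 ≤ ‖V x‖ + ‖W x‖ + |θ| * ‖V x‖ + D * ‖W x‖)]

theorem norm_deriv_xModeP_le {A D D' d : ℝ} (hz : ‖(α x : ℂ) + I * ν‖ ≤ A) (hδ : |δ x| ≤ D)
    (hd : |d| ≤ D') :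
    ‖-(θ * (α x + I * ν) + d) * V x - δ x * W x‖
      ≤ (|θ| * A + D' + D) * ‖xModeVec ρ θ δ V W x‖ := by
  have hA : 0 ≤ A := (norm_nonneg _).trans hz
  calc ‖-(θ * (α x + I * ν) + d) * V x - δ x * W x‖
      ≤ (|θ| * A + D') * ‖V x‖ + D * ‖W x‖ := by
        refine (norm_sub_le _ _).trans (add_le_add ?_ ?_)
        · rw [norm_mul, norm_neg]
          gcongr
          refine (norm_add_le _ _).trans ?_
          rw [norm_mul, norm_real, norm_real, Real.norm_eq_abs, Real.norm_eq_abs]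
          gcongr
        · rw [norm_mul, norm_real, Real.norm_eq_abs]
          gcongr
    _ ≤ (|θ| * A + D') * ‖xModeVec ρ θ δ V W x‖ + D * ‖xModeVec ρ θ δ V W x‖ := by
        have : 0 ≤ D := (abs_nonneg _).trans hδ
        have : 0 ≤ D' := (abs_nonneg _).trans hd
        gcongr
        exacts [norm_V_le_norm_xModeVec, norm_W_le_norm_xModeVec]
    _ = _ := by ring

namespace IsXModeSolutionOn

theorem norm_mul_norm_U_eq (h : IsXModeSolutionOn θ ν α δ U V W s) (hx : x ∈ s) :
    ‖(α x : ℂ) + I * ν‖ * ‖U x‖ = ‖xModeP θ δ V W x‖ := by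
  have hrel : (α x + I * ν) * U x = I * xModeP θ δ V W x := by
    unfold xModeP
    linear_combination -h.relation x hx
  rw [← norm_mul, hrel, norm_mul, norm_I, one_mul]

theorem hasDerivAt_xModeP (h : IsXModeSolutionOn θ ν α δ U V W s) (hx : x ∈ s) {d : ℝ}
    (hδ : HasDerivAt δ d x) :
    HasDerivAt (xModeP θ δ V W) (-(θ * (α x + I * ν) + d) * V x - δ x * W x) x := by
  refine (((h.hasDerivAt_W x hx).const_mul (θ : ℂ)).sub
    (hδ.ofReal_comp.mul (h.hasDerivAt_V x hx))).congr_deriv ?_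
  ring

theorem hasDerivAt_xModeVec (h : IsXModeSolutionOn θ ν α δ U V W s) (hx : x ∈ s) {d ρ : ℝ}
    (hδ : HasDerivAt δ d x) :
    HasDerivAt (xModeVec ρ θ δ V W) (W x + I * θ * U x, I * δ x * U x - (α x + I * ν) * V x,
      ρ • (-(θ * (α x + I * ν) + d) * V x - δ x * W x)) x :=
  (h.hasDerivAt_V x hx).prodMk
    ((h.hasDerivAt_W x hx).prodMk ((h.hasDerivAt_xModeP hx hδ).const_smul ρ))

theorem mul_norm_deriv_xModeVec_le (h : IsXModeSolutionOn θ ν α δ U V W s) (hx : x ∈ s)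
    (hx0 : 0 ≤ x) {r A D D' d : ℝ} (hρ : 0 ≤ ρ) (hρr : 4 * (|θ| + D) ≤ r * ρ)
    (hz : ‖(α x : ℂ) + I * ν‖ ≤ A) (hrz : r * x ≤ ‖(α x : ℂ) + I * ν‖) (hδ : |δ x| ≤ D)
    (hd : |d| ≤ D') :
    x * ‖(W x + I * θ * U x, I * δ x * U x - (α x + I * ν) * V x,
        ρ • (-(θ * (α x + I * ν) + d) * V x - δ x * W x))‖
      ≤ ((1 + A + ρ * (|θ| * A + D' + D)) * x + 1 / 4) * ‖xModeVec ρ θ δ V W x‖ := by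
  set N := ‖xModeVec ρ θ δ V W x‖
  set c := |θ| * A + D' + D
  have hA : 0 ≤ A := (norm_nonneg _).trans hz
  have hD : 0 ≤ D := (abs_nonneg _).trans hδ
  have hc : 0 ≤ c := by have := (abs_nonneg _).trans hd; positivity
  have hN : 0 ≤ N := norm_nonneg _
  have hxN : 0 ≤ x * N := by positivity
  have hxU : 0 ≤ x * ‖U x‖ := by positivity
  -- `r x ‖U‖ ≤ ‖P‖` and the choice of `ρ` make the singular `U`-terms small
  have hU : (|θ| + D) * (x * ‖U x‖) ≤ N / 4 := by
    have hrU : r * x * ‖U x‖ ≤ ‖xModeP θ δ V W x‖ :=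
      (h.norm_mul_norm_U_eq hx).symm ▸ mul_le_mul_of_nonneg_right hrz (norm_nonneg _)
    have := mul_norm_xModeP_le_norm_xModeVec (θ := θ) (δ := δ) (V := V) (W := W) (x := x) hρ
    nlinarith [mul_le_mul_of_nonneg_right hρr hxU]
  have hθU : |θ| * (x * ‖U x‖) ≤ N / 4 := by nlinarith
  have hδU : D * (x * ‖U x‖) ≤ N / 4 := by nlinarith [abs_nonneg θ]
  have hbound : ((1 + A + ρ * c) * x + 1 / 4) * N
      = x * N + A * (x * N) + ρ * c * (x * N) + N / 4 := by ring
  have hAxN := mul_nonneg hA hxN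
  have hρcxN : 0 ≤ ρ * c * (x * N) := by positivity
  simp only [Prod.norm_mk, mul_max_of_nonneg _ _ hx0]
  refine max_le ?_ (max_le ?_ ?_)
  · calc x * ‖W x + I * θ * U x‖ ≤ x * ‖W x‖ + |θ| * (x * ‖U x‖) := by
          refine (mul_le_mul_of_nonneg_left (norm_add_le _ _) hx0).trans_eq ?_
          rw [norm_mul, norm_mul, norm_I, one_mul, norm_real, Real.norm_eq_abs]
          ring
      _ ≤ x * N + N / 4 := by gcongr; exact norm_W_le_norm_xModeVec
      _ ≤ _ := by linarith
  · calc x * ‖I * δ x * U x - (α x + I * ν) * V x‖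
          ≤ |δ x| * (x * ‖U x‖) + ‖(α x : ℂ) + I * ν‖ * (x * ‖V x‖) := by
          refine (mul_le_mul_of_nonneg_left (norm_sub_le _ _) hx0).trans_eq ?_
          rw [norm_mul, norm_mul, norm_mul, norm_I, one_mul, norm_real, Real.norm_eq_abs]
          ring
      _ ≤ D * (x * ‖U x‖) + A * (x * N) := by gcongr; exact norm_V_le_norm_xModeVec
      _ ≤ _ := by linarith
  · calc x * ‖ρ • (-(θ * (α x + I * ν) + d) * V x - δ x * W x)‖
          = ρ * (x * ‖-(θ * (α x + I * ν) + d) * V x - δ x * W x‖) := by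
          rw [norm_smul, Real.norm_of_nonneg hρ]
          ring
      _ ≤ ρ * (x * (c * N)) := by gcongr; exact norm_deriv_xModeP_le hz hδ hd
      _ = ρ * c * (x * N) := by ring
      _ ≤ _ := by linarith

end IsXModeSolutionOn

end XMode

theorem exists_norm_xModeP_le {θ r H A D D' : ℝ} {α δ δ' : ℝ → ℝ} (hr : 0 < r) (hH : 0 < H)
    (hα : ∀ t ∈ Ioc 0 H, |α t| ≤ A) (hαr : ∀ t ∈ Ioc 0 H, r * t ≤ |α t|)
    (hδ : ∀ t ∈ Ioc 0 H, |δ t| ≤ D) (hδ' : ∀ t ∈ Ioc 0 H, HasDerivAt δ (δ' t) t)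
    (hD' : ∀ t ∈ Ioc 0 H, |δ' t| ≤ D') :
    ∃ C > 0, ∀ ν ∈ Ioc (0 : ℝ) 1, ∀ U V W : ℝ → ℂ, IsXModeSolutionOn θ ν α δ U V W (Ioc 0 H) →
      ∀ x ∈ Ioc 0 H, ‖xModeP θ δ V W x‖ ≤ C * (‖V H‖ + ‖W H‖) := by
  have hH' : H ∈ Ioc 0 H := ⟨hH, le_rfl⟩
  have hA : 0 ≤ A := (abs_nonneg _).trans (hα H hH')
  have hD : 0 ≤ D := (abs_nonneg _).trans (hδ H hH')
  have hD'0 : 0 ≤ D' := (abs_nonneg _).trans (hD' H hH')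
  set ρ := 4 * (|θ| + D) / r + 1
  have hρ : 1 ≤ ρ := le_add_of_nonneg_left (by positivity)
  have hρr : 4 * (|θ| + D) ≤ r * ρ := by
    have : r * ρ = 4 * (|θ| + D) + r := by simp only [ρ]; field_simp
    linarith
  set c := |θ| * (A + 1) + D' + D
  obtain ⟨C, hC0, hC⟩ := exists_norm_le_mul_norm_of_mul_norm_deriv_le (E := ℂ × ℂ × ℂ) (F := ℂ)
    (κ := 1 + (A + 1) + ρ * c) (c := c) (ρ := ρ) (by positivity) (by positivity) (by positivity) hH
  refine ⟨C * (ρ * (1 + |θ| + D)), by positivity, fun ν hν U V W h x hx => ?_⟩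
  have hz : ∀ t ∈ Ioc 0 H, ‖(α t : ℂ) + I * ν‖ ≤ A + 1 := fun t ht => by
    refine (norm_add_le _ _).trans ?_
    rw [norm_mul, norm_I, one_mul, norm_real, norm_real, Real.norm_eq_abs,
      Real.norm_of_nonneg hν.1.le]
    exact add_le_add (hα t ht) hν.2
  have hrz : ∀ t ∈ Ioc 0 H, r * t ≤ ‖(α t : ℂ) + I * ν‖ := fun t ht =>
    (hαr t ht).trans (by simpa using abs_re_le_norm ((α t : ℂ) + I * ν))
  calc ‖xModeP θ δ V W x‖ ≤ C * ‖xModeVec ρ θ δ V W H‖ :=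
        hC _ _ _ _ (fun t ht => h.hasDerivAt_xModeVec ht (hδ' t ht))
          (fun t ht => h.mul_norm_deriv_xModeVec_le ht ht.1.le (zero_le_one.trans hρ) hρr
            (hz t ht) (hrz t ht) (hδ t ht) (hD' t ht))
          (fun t ht => h.hasDerivAt_xModeP ht (hδ' t ht))
          (fun t ht => norm_deriv_xModeP_le (hz t ht) (hδ t ht) (hD' t ht))
          (fun t ht => mul_norm_xModeP_le_norm_xModeVec (zero_le_one.trans hρ)) x hx
    _ ≤ C * (ρ * (1 + |θ| + D) * (‖V H‖ + ‖W H‖)) := by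
        gcongr
        exact norm_xModeVec_le hρ (hδ H hH')
    _ = _ := by ring

theorem pointwise_bound_on_U_general
    (L H r θ : ℝ) (hL : 0 < L) (hH : 0 < H) (hr : 0 < r)
    (α δ : ℝ → ℝ)
    (hαbd : ∃ C, ∀ x, -L ≤ x → |α x| ≤ C)
    (hαr : ∀ x ∈ Set.Icc (-L) H, r * |x| ≤ |α x|)
    (hδ : ContDiffOn ℝ 1 δ (Set.Ici (-L)))
    (hδbd : ∃ C, ∀ x, -L ≤ x → |δ x| ≤ C) :
    ∃ C > 0, ∀ ν ∈ Set.Ioc (0:ℝ) 1, ∀ U V W : ℝ → ℂ,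
      (∀ x, -L ≤ x → HasDerivAt V (W x + Complex.I * (θ : ℂ) * U x) x) →
      (∀ x, -L ≤ x →
        Complex.I * (θ : ℂ) * W x - ((α x : ℂ) + Complex.I * (ν : ℂ)) * U x
          - Complex.I * (δ x : ℂ) * V x = 0) →
      (∀ x, -L ≤ x → HasDerivAt W
        (Complex.I * (δ x : ℂ) * U x
          - ((α x : ℂ) + Complex.I * (ν : ℂ)) * V x) x) →
      ∀ x : ℝ, 0 < x → x ≤ H →
        ‖U x‖ ≤ C * (‖V H‖ + ‖W H‖) / Real.sqrt (r^2 * x^2 + ν^2) := by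
  obtain ⟨A, hA⟩ := hαbd
  obtain ⟨D, hD⟩ := hδbd
  obtain ⟨D', hD'⟩ := hδ.exists_abs_deriv_le (neg_neg_of_pos hL) (c := H)
  have hmem : ∀ t ∈ Ioc 0 H, -L ≤ t := fun t ht => by linarith [ht.1]
  have hαr' : ∀ t ∈ Ioc 0 H, |r * t| ≤ |α t| := fun t ht => by
    simpa only [abs_mul, abs_of_pos hr] using hαr t ⟨hmem t ht, ht.2⟩
  have hδ' : ∀ t ∈ Ioc 0 H, HasDerivAt δ (deriv δ t) t := fun t ht =>
    ((hδ.differentiableOn one_ne_zero t (hmem t ht)).differentiableAt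
      (Ici_mem_nhds (by linarith [ht.1]))).hasDerivAt
  obtain ⟨C, hC0, hC⟩ := exists_norm_xModeP_le (θ := θ) hr hH (fun t ht => hA t (hmem t ht))
    (fun t ht => (le_abs_self _).trans (hαr' t ht)) (fun t ht => hD t (hmem t ht)) hδ'
    (fun t ht => hD' t (Ioc_subset_Icc_self ht))
  refine ⟨C, hC0, fun ν hν U V W hV hrel hW x hx hxH => ?_⟩
  have hsol : IsXModeSolutionOn θ ν α δ U V W (Ioc 0 H) :=
    ⟨fun t ht => hV t (hmem t ht), fun t ht => hrel t (hmem t ht), fun t ht => hW t (hmem t ht)⟩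
  have hx' : x ∈ Ioc 0 H := ⟨hx, hxH⟩
  rw [le_div_iff₀ (by positivity)]
  calc ‖U x‖ * √(r ^ 2 * x ^ 2 + ν ^ 2) ≤ ‖U x‖ * ‖(α x : ℂ) + I * ν‖ := by
        rw [← mul_pow]
        gcongr
        exact sqrt_sq_add_sq_le_norm_ofReal_add_I_mul (hαr' x hx')
    _ = ‖xModeP θ δ V W x‖ := by rw [mul_comm]; exact hsol.norm_mul_norm_U_eq hx'
    _ ≤ C * (‖V H‖ + ‖W H‖) := hC ν hν U V W hsol x hx'

/-- Pointwise bound on `U` (Proposition 5.17 of the paper): there is a constant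
`C`, independent of `ν ∈ (0,1]` and of the solution, with
`|U(x)| ≤ C (|V(H)| + |W(H)|) / √(r²x² + ν²)` for `0 < x ≤ H`. -/
theorem pointwise_bound_on_U
    (L H r θ : ℝ) (hL : 0 < L) (hH : 0 < H) (hr : 0 < r)
    (α δ : ℝ → ℝ)
    (hα : ContDiffOn ℝ 2 α (Set.Ici (-L)))
    (hαbd : ∃ C, ∀ x, -L ≤ x → |α x| ≤ C)
    (hα0 : α 0 = 0) (hα'0 : deriv α 0 < 0)
    (hαr : ∀ x ∈ Set.Icc (-L) H, r * |x| ≤ |α x|)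
    (hδ : ContDiffOn ℝ 1 δ (Set.Ici (-L)))
    (hδbd : ∃ C, ∀ x, -L ≤ x → |δ x| ≤ C) :
    ∃ C > 0, ∀ ν ∈ Set.Ioc (0:ℝ) 1, ∀ U V W : ℝ → ℂ,
      (∀ x, -L ≤ x → HasDerivAt V (W x + Complex.I * (θ : ℂ) * U x) x) →
      (∀ x, -L ≤ x →
        Complex.I * (θ : ℂ) * W x - ((α x : ℂ) + Complex.I * (ν : ℂ)) * U x
          - Complex.I * (δ x : ℂ) * V x = 0) →
      (∀ x, -L ≤ x → HasDerivAt W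
        (Complex.I * (δ x : ℂ) * U x
          - ((α x : ℂ) + Complex.I * (ν : ℂ)) * V x) x) →
      ∀ x : ℝ, 0 < x → x ≤ H →
        ‖U x‖ ≤ C * (‖V H‖ + ‖W H‖) / Real.sqrt (r^2 * x^2 + ν^2) :=
  pointwise_bound_on_U_general L H r θ hL hH hr α δ hαbd hαr hδ hδbd
end

section
/- Let L, H > 0 and let α : [-L,H] → ℝ be C¹ with α(0) = 0, α'(0) < 0, and r|x| ≤ |α(x)| for all x ∈ [-L,H] for some r > 0. Then lim_{ν→0⁺} ∫_{-L}^{H} ν / (α(x)² + ν²) dx = π / |α'(0)|. -/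
/-!
Substituting `x = ν w` turns the integral into `∫ dw / (1 + b_ν(w)²)` over `[A/ν, B/ν]`, with
`b_ν(w) = α(ν w)/ν`. As `ν → 0⁺`, `b_ν(w) → α'(0) w`, and `r|w| ≤ |b_ν(w)|` gives the integrable
majorant `1 / (1 + r² w²)`, so by dominated convergence the limit is
`∫_ℝ dw / (1 + α'(0)² w²) = π / |α'(0)|`.
-/

open Filter MeasureTheory Set Topology Real

theorem integral_inv_one_add_sq_comp_mul (a : ℝ) : ∫ w, (1 + (a * w) ^ 2)⁻¹ = π / |a| := by
  rw [Measure.integral_comp_mul_left (fun x : ℝ => (1 + x ^ 2)⁻¹) a,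
    integral_univ_inv_one_add_sq, smul_eq_mul, abs_inv, inv_mul_eq_div]

theorem mem_Ioc_div_iff {A B ν w : ℝ} (hν : 0 < ν) :
    w ∈ Ioc (A / ν) (B / ν) ↔ ν * w ∈ Ioc A B := by
  rw [mem_Ioc, mem_Ioc, div_lt_iff₀ hν, le_div_iff₀ hν, mul_comm w]

theorem HasDerivAt.tendsto_comp_mul_div {α : ℝ → ℝ} {a : ℝ} (h : HasDerivAt α a 0)
    (h0 : α 0 = 0) (w : ℝ) :
    Tendsto (fun ν => α (ν * w) / ν) (𝓝[≠] 0) (𝓝 (a * w)) := by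
  rw [← zero_mul w] at h
  have hcomp := hasDerivAt_iff_tendsto_slope_zero.mp (h.comp 0 (hasDerivAt_mul_const w))
  simpa [h0, div_eq_inv_mul] using hcomp

noncomputable def rescaledLorentzian (α : ℝ → ℝ) (A B ν w : ℝ) : ℝ :=
  (Ioc (A / ν) (B / ν)).indicator (fun w => (1 + (α (ν * w) / ν) ^ 2)⁻¹) w

section
variable {α : ℝ → ℝ} {A B ν : ℝ}

theorem integral_lorentzian_eq_integral_rescaledLorentzian (hν : 0 < ν) (hAB : A ≤ B) :
    ∫ x in A..B, ν / (α x ^ 2 + ν ^ 2) = ∫ w, rescaledLorentzian α A B ν w := by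
  have hAB' : A / ν ≤ B / ν := div_le_div_of_nonneg_right hAB hν.le
  have hsubst := intervalIntegral.integral_comp_mul_left (fun x => ν / (α x ^ 2 + ν ^ 2))
    (a := A / ν) (b := B / ν) hν.ne'
  rw [mul_div_cancel₀ _ hν.ne', mul_div_cancel₀ _ hν.ne', eq_inv_smul_iff₀ hν.ne'] at hsubst
  simp only [rescaledLorentzian]
  rw [integral_indicator measurableSet_Ioc, ← intervalIntegral.integral_of_le hAB', ← hsubst,
    smul_eq_mul, ← intervalIntegral.integral_const_mul]
  refine intervalIntegral.integral_congr fun w _ => ?_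
  field_simp
  ring

theorem norm_rescaledLorentzian_le {r : ℝ} (hr : 0 < r)
    (hαr : ∀ x ∈ Icc A B, r * |x| ≤ |α x|) (hν : 0 < ν) (w : ℝ) :
    ‖rescaledLorentzian α A B ν w‖ ≤ (1 + (r * w) ^ 2)⁻¹ := by
  by_cases hw : w ∈ Ioc (A / ν) (B / ν)
  · have hνw := hαr _ (Ioc_subset_Icc_self ((mem_Ioc_div_iff hν).mp hw))
    have hsq : (r * w) ^ 2 ≤ (α (ν * w) / ν) ^ 2 := by
      rw [sq_le_sq, abs_mul, abs_div, abs_of_pos hr, abs_of_pos hν, le_div_iff₀ hν]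
      rw [abs_mul, abs_of_pos hν] at hνw
      linarith
    rw [rescaledLorentzian, indicator_of_mem hw, norm_of_nonneg (by positivity)]
    exact inv_anti₀ (by positivity) (by linarith)
  · rw [rescaledLorentzian, indicator_of_notMem hw, norm_zero]
    positivity

theorem eventually_mem_Ioc_div (hA : A < 0) (hB : 0 < B) (w : ℝ) :
    ∀ᶠ ν in 𝓝[>] 0, w ∈ Ioc (A / ν) (B / ν) := by
  have hlim : Tendsto (fun ν : ℝ => ν * w) (𝓝 0) (𝓝 0) := by
    simpa using (continuous_mul_const w).tendsto 0
  filter_upwards [self_mem_nhdsWithin, nhdsWithin_le_nhds (hlim (Ioc_mem_nhds hA hB))]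
    with ν hν hνw
  exact (mem_Ioc_div_iff hν).mpr hνw

theorem tendsto_rescaledLorentzian {a : ℝ} (hA : A < 0) (hB : 0 < B) (h : HasDerivAt α a 0)
    (h0 : α 0 = 0) (w : ℝ) :
    Tendsto (fun ν => rescaledLorentzian α A B ν w) (𝓝[>] 0) (𝓝 (1 + (a * w) ^ 2)⁻¹) := by
  have hquot := (h.tendsto_comp_mul_div h0 w).mono_left (nhdsWithin_mono _ fun ν hν => ne_of_gt hν)
  refine Tendsto.congr' ?_ (((hquot.pow 2).const_add 1).inv₀ (by positivity))
  filter_upwards [eventually_mem_Ioc_div hA hB w] with ν hw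
  rw [rescaledLorentzian, indicator_of_mem hw]

theorem aestronglyMeasurable_rescaledLorentzian (hα : ContinuousOn α (Icc A B)) (hν : 0 < ν) :
    AEStronglyMeasurable (rescaledLorentzian α A B ν) := by
  refine (aestronglyMeasurable_indicator_iff measurableSet_Ioc).mpr ?_
  refine ContinuousOn.aestronglyMeasurable ?_ measurableSet_Ioc
  have hmaps : MapsTo (ν * ·) (Ioc (A / ν) (B / ν)) (Icc A B) := fun w hw =>
    Ioc_subset_Icc_self ((mem_Ioc_div_iff hν).mp hw)
  exact (((hα.comp (continuous_const_mul ν).continuousOn hmaps).div_const ν).pow 2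
    |>.const_add 1).inv₀ fun w _ => by simp only [Pi.pow_apply, Function.comp_apply]; positivity

theorem tendsto_integral_lorentzian {a r : ℝ} (hA : A < 0) (hB : 0 < B) (hr : 0 < r)
    (hα : ContinuousOn α (Icc A B)) (h : HasDerivAt α a 0) (h0 : α 0 = 0)
    (hαr : ∀ x ∈ Icc A B, r * |x| ≤ |α x|) :
    Tendsto (fun ν => ∫ x in A..B, ν / (α x ^ 2 + ν ^ 2)) (𝓝[>] 0) (𝓝 (π / |a|)) := by
  rw [← integral_inv_one_add_sq_comp_mul]
  have hrescaled : Tendsto (fun ν => ∫ w, rescaledLorentzian α A B ν w) (𝓝[>] 0)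
      (𝓝 (∫ w, (1 + (a * w) ^ 2)⁻¹)) :=
    tendsto_integral_filter_of_dominated_convergence _
      (eventually_mem_nhdsWithin.mono fun _ hν => aestronglyMeasurable_rescaledLorentzian hα hν)
      (eventually_mem_nhdsWithin.mono fun _ hν =>
        ae_of_all _ (norm_rescaledLorentzian_le hr hαr hν))
      (integrable_inv_one_add_sq.comp_mul_left' hr.ne')
      (ae_of_all _ (tendsto_rescaledLorentzian hA hB h h0))
  refine hrescaled.congr' ?_
  filter_upwards [eventually_mem_nhdsWithin] with ν hν
  exact (integral_lorentzian_eq_integral_rescaledLorentzian hν (hA.trans hB).le).symm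

end

theorem lorentzian_concentration_general
    (L H r : ℝ) (hL : 0 < L) (hH : 0 < H) (hr : 0 < r)
    (α α' : ℝ → ℝ)
    (hαd : ∀ x ∈ Set.Icc (-L) H, HasDerivWithinAt α (α' x) (Set.Icc (-L) H) x)
    (hα0 : α 0 = 0)
    (hαr : ∀ x ∈ Set.Icc (-L) H, r * |x| ≤ |α x|) :
    Filter.Tendsto (fun ν : ℝ => ∫ x in (-L)..H, ν / ((α x)^2 + ν^2))
      (nhdsWithin 0 (Set.Ioi 0)) (nhds (Real.pi / |α' 0|)) := by
  have hIcc : Icc (-L) H ∈ 𝓝 (0 : ℝ) := Icc_mem_nhds (neg_neg_of_pos hL) hH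
  exact tendsto_integral_lorentzian (neg_neg_of_pos hL) hH hr
    (fun x hx => (hαd x hx).continuousWithinAt)
    ((hαd 0 (mem_of_mem_nhds hIcc)).hasDerivAt hIcc) hα0 hαr

/-- The Lorentzian concentration limit underlying the limit absorption
principle: if `α` is C¹ on `[-L,H]` with `α(0) = 0`, `α'(0) < 0` and
`r|x| ≤ |α(x)|`, then `∫_{-L}^{H} ν/(α(x)² + ν²) dx → π/|α'(0)|` as `ν → 0⁺`. -/
theorem lorentzian_concentration
    (L H r : ℝ) (hL : 0 < L) (hH : 0 < H) (hr : 0 < r)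
    (α α' : ℝ → ℝ)
    (hαd : ∀ x ∈ Set.Icc (-L) H, HasDerivWithinAt α (α' x) (Set.Icc (-L) H) x)
    (hα'c : ContinuousOn α' (Set.Icc (-L) H))
    (hα0 : α 0 = 0) (hα'0 : α' 0 < 0)
    (hαr : ∀ x ∈ Set.Icc (-L) H, r * |x| ≤ |α x|) :
    Filter.Tendsto (fun ν : ℝ => ∫ x in (-L)..H, ν / ((α x)^2 + ν^2))
      (nhdsWithin 0 (Set.Ioi 0)) (nhds (Real.pi / |α' 0|)) :=
  lorentzian_concentration_general L H r hL hH hr α α' hαd hα0 hαr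
end
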